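/- arXiv:1702.06480 — 8 statements merged into one kernel-verified Lean document; each statement's English description precedes it below -/
import Mathlib

section
/- For all integers a and b, not both zero, with d := gcd(a,b), there exist integers x and y such that a·x + b·y = d and max{|x|, |y|} ≤ max{|a|/d, |b|/d}. -/
/-!
Dividing by `d = gcd a b` reduces to coprime `a`, `b`. There, shift a Bézout coefficient `x`
by a multiple of `b` into `[0, |b|)`; the partner coefficient `y` then satisfies
`|b| |y| = |1 - a x| ≤ 1 + |a| (|b| - 1)`, which is at most `|b| max |a| |b|`.
-/

theorem IsCoprime.exists_mul_add_mul_eq_one_of_nonneg_of_lt_abs {a b : ℤ} (h : IsCoprime a b)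
    (hb : b ≠ 0) : ∃ x y : ℤ, a * x + b * y = 1 ∧ 0 ≤ x ∧ x < |b| := by
  obtain ⟨u, v, huv⟩ := h
  refine ⟨u % b, v + u / b * a, ?_, Int.emod_nonneg u hb, Int.emod_lt_abs u hb⟩
  calc a * (u % b) + b * (v + u / b * a) = a * (u % b + b * (u / b)) + b * v := by ring
    _ = 1 := by rw [Int.emod_add_mul_ediv, ← huv]; ring

theorem Int.abs_le_max_of_mul_add_mul_eq_one {a b x y : ℤ} (h : a * x + b * y = 1)
    (hx₀ : 0 ≤ x) (hx : x < |b|) : |y| ≤ max |a| |b| := by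
  have hb : 0 < |b| := hx₀.trans_lt hx
  have hby : |b| * |y| ≤ 1 + |a| * (|b| - 1) :=
    calc |b| * |y| = |1 - a * x| := by rw [← abs_mul, ← h, add_sub_cancel_left]
      _ ≤ 1 + |a| * x := by
        simpa [abs_mul, abs_of_nonneg hx₀] using abs_sub (1 : ℤ) (a * x)
      _ ≤ 1 + |a| * (|b| - 1) := by gcongr; omega
  refine le_of_mul_le_mul_left (hby.trans ?_) hb
  rcases (abs_nonneg a).eq_or_lt with ha | ha
  · rw [← ha, max_eq_right hb.le]
    nlinarith
  · nlinarith [le_max_left |a| |b|]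

theorem IsCoprime.exists_mul_add_mul_eq_one_abs_le_max {a b : ℤ} (h : IsCoprime a b) :
    ∃ x y : ℤ, a * x + b * y = 1 ∧ max |x| |y| ≤ max |a| |b| := by
  rcases eq_or_ne b 0 with rfl | hb
  · have ha : IsUnit a := isCoprime_zero_right.mp h
    refine ⟨a, 0, by simpa using Int.isUnit_mul_self ha, ?_⟩
    simp
  · obtain ⟨x, y, hxy, hx₀, hx⟩ := h.exists_mul_add_mul_eq_one_of_nonneg_of_lt_abs hb
    refine ⟨x, y, hxy, max_le ?_ (Int.abs_le_max_of_mul_add_mul_eq_one hxy hx₀ hx)⟩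
    rw [abs_of_nonneg hx₀]
    exact hx.le.trans (le_max_right _ _)

theorem stmt_1 (a b : ℤ) (hab : ¬(a = 0 ∧ b = 0)) :
    ∃ x y : ℤ, a * x + b * y = Int.gcd a b ∧
      max |x| |y| ≤ max (|a| / (Int.gcd a b : ℤ)) (|b| / (Int.gcd a b : ℤ)) := by
  have hd : 0 < Int.gcd a b := Int.gcd_pos_iff.mpr (not_and_or.mp hab)
  have hd' : (0 : ℤ) < Int.gcd a b := by exact_mod_cast hd
  obtain ⟨a', b', hcop, ha, hb⟩ := Int.exists_gcd_one hd
  generalize (Int.gcd a b : ℤ) = d at *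
  subst ha hb
  obtain ⟨x, y, hxy, hle⟩ :=
    (Int.isCoprime_iff_gcd_eq_one.mpr hcop).exists_mul_add_mul_eq_one_abs_le_max
  refine ⟨x, y, ?_, ?_⟩
  · linear_combination d * hxy
  · simpa only [abs_mul, abs_of_pos hd', Int.mul_ediv_cancel _ hd'.ne'] using hle
end

section
/- The map Ĵ ↦ π_k^⊥(Âᵀ Ĵ) is a linear isomorphism from ℝ^{n−1} onto the hyperplane k^⊥ = {y ∈ ℝⁿ : y·k = 0}. -/
/-!
Since `det A ≠ 0`, every `y ∈ ℝⁿ` is uniquely of the form `yᵀ = Jᵀ Â + c k`, i.e.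
`ℝⁿ = range Âᵀ ⊕ ℝ k`. The projection `π_k^⊥` only changes a vector by a multiple of `k`,
kills `k` and fixes `k^⊥`, so on `range Âᵀ` it is injective with image `k^⊥`.
-/

open scoped Matrix

/-- Euclidean dot product on `Fin n → ℝ`. -/
def edot {n : ℕ} (x y : Fin n → ℝ) : ℝ := ∑ i, x i * y i

/-- Orthogonal projection onto the hyperplane orthogonal to `k`:
`π_k^⊥ y = y − κ⁻¹ (y·k) k` with `κ = ‖k‖²`. -/
noncomputable def eproj {n : ℕ} (k y : Fin n → ℝ) : Fin n → ℝ :=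
  y - ((∑ i, k i ^ 2)⁻¹ * edot y k) • k

namespace Matrix

variable {R : Type*} {m : ℕ}

-- `of (Fin.snoc (fun i => B i) r)` is `B` with the row `r` appended; the eta-expansion is needed
-- because `Matrix` is not reducibly a function type, which would block the `Fin.snoc` lemmas.
theorem of_snoc_eq_dite {n : ℕ} (B : Matrix (Fin m) (Fin n) R) (r : Fin n → R) :
    of (Fin.snoc (fun i => B i) r) = of fun (i : Fin (m + 1)) j =>
      if h : (i : ℕ) < m then B ⟨i, h⟩ j else r j := by
  ext i j
  simp only [Fin.snoc, of_apply]
  split_ifs <;> rfl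

theorem snoc_vecMul_of_snoc {n : ℕ} [Semiring R] (B : Matrix (Fin m) (Fin n) R)
    (r : Fin n → R) (x : Fin m → R) (c : R) :
    Fin.snoc x c ᵥ* of (Fin.snoc (fun i => B i) r) = x ᵥ* B + c • r := by
  ext j
  simp only [vecMul, dotProduct, Fin.sum_univ_castSucc, of_apply, Fin.snoc_castSucc,
    Fin.snoc_last, Pi.add_apply, Pi.smul_apply, smul_eq_mul]

variable [CommRing R] {B : Matrix (Fin m) (Fin (m + 1)) R} {r : Fin (m + 1) → R}

theorem vecMul_add_smul_injective2 (h : IsUnit (of (Fin.snoc (fun i => B i) r))) :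
    Function.Injective2 fun (x : Fin m → R) (c : R) => x ᵥ* B + c • r := by
  intro x x' c c' hxc
  refine Fin.snoc_injective2 (vecMul_injective_of_isUnit h ?_)
  simpa only [snoc_vecMul_of_snoc] using hxc

theorem exists_vecMul_add_smul_eq (h : IsUnit (of (Fin.snoc (fun i => B i) r)))
    (y : Fin (m + 1) → R) : ∃ (x : Fin m → R) (c : R), x ᵥ* B + c • r = y := by
  obtain ⟨w, hw⟩ := vecMul_surjective_iff_isUnit.2 h y
  exact ⟨Fin.init w, w (Fin.last m), by rw [← snoc_vecMul_of_snoc, Fin.snoc_init_self]; exact hw⟩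

end Matrix

section Projection

variable {n : ℕ} {k : Fin n → ℝ}

theorem edot_eq_dotProduct (x y : Fin n → ℝ) : edot x y = x ⬝ᵥ y := rfl

theorem eproj_eq_dotProduct (k y : Fin n → ℝ) :
    eproj k y = y - ((k ⬝ᵥ k)⁻¹ * (y ⬝ᵥ k)) • k := by
  simp only [eproj, edot, dotProduct, sq]

theorem exists_eproj_eq_add_smul (k y : Fin n → ℝ) : ∃ c : ℝ, eproj k y = y + c • k :=
  ⟨_, by rw [eproj, sub_eq_add_neg, ← neg_smul]⟩

theorem eproj_of_edot_eq_zero {y : Fin n → ℝ} (hy : edot y k = 0) : eproj k y = y := by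
  simp [eproj, hy]

theorem edot_eproj_self (hk : k ≠ 0) (y : Fin n → ℝ) : edot (eproj k y) k = 0 := by
  have hkk : k ⬝ᵥ k ≠ 0 := dotProduct_self_eq_zero.not.2 hk
  rw [eproj_eq_dotProduct, edot_eq_dotProduct, sub_dotProduct, smul_dotProduct, smul_eq_mul]
  field_simp
  ring

theorem eproj_add_smul (hk : k ≠ 0) (x : Fin n → ℝ) (c : ℝ) :
    eproj k (x + c • k) = eproj k x := by
  have hkk : k ⬝ᵥ k ≠ 0 := dotProduct_self_eq_zero.not.2 hk
  have hcoeff : (k ⬝ᵥ k)⁻¹ * ((x + c • k) ⬝ᵥ k) = (k ⬝ᵥ k)⁻¹ * (x ⬝ᵥ k) + c := by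
    rw [add_dotProduct, smul_dotProduct, smul_eq_mul]
    field_simp
  rw [eproj_eq_dotProduct, eproj_eq_dotProduct, hcoeff, add_smul]
  abel

end Projection

theorem stmt_2_general (m : ℕ) (k : Fin (m + 1) → ℝ) (hk : k ≠ 0)
    (Ahat : Matrix (Fin m) (Fin (m + 1)) ℝ)
    (hdet : (Matrix.of fun (i j : Fin (m + 1)) =>
        if h : (i : ℕ) < m then Ahat ⟨i, h⟩ j else k j).det = 1) :
    Function.Injective (fun Jhat : Fin m → ℝ => eproj k (Ahatᵀ.mulVec Jhat)) ∧
      Set.range (fun Jhat : Fin m → ℝ => eproj k (Ahatᵀ.mulVec Jhat)) =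
        {y : Fin (m + 1) → ℝ | edot y k = 0} := by
  have hA : IsUnit (Matrix.of (Fin.snoc (fun i => Ahat i) k)) := by
    rw [Matrix.isUnit_iff_isUnit_det, Matrix.of_snoc_eq_dite, hdet]
    exact isUnit_one
  simp only [Matrix.mulVec_transpose]
  refine ⟨fun J J' hJ => ?_, Set.ext fun y => ⟨?_, fun hy => ?_⟩⟩
  · obtain ⟨c, hc⟩ := exists_eproj_eq_add_smul k (J ᵥ* Ahat)
    obtain ⟨c', hc'⟩ := exists_eproj_eq_add_smul k (J' ᵥ* Ahat)
    exact (Matrix.vecMul_add_smul_injective2 hA (hc.symm.trans (hJ.trans hc'))).1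
  · rintro ⟨J, rfl⟩
    exact edot_eproj_self hk _
  · obtain ⟨J, c, rfl⟩ := Matrix.exists_vecMul_add_smul_eq hA y
    refine ⟨J, ?_⟩
    dsimp only
    rw [← eproj_add_smul hk _ c, eproj_of_edot_eq_zero hy]

theorem stmt_2 (m : ℕ) (hm : 1 ≤ m) (k : Fin (m + 1) → ℝ) (hk : k ≠ 0)
    (Ahat : Matrix (Fin m) (Fin (m + 1)) ℝ)
    (hdet : (Matrix.of fun (i j : Fin (m + 1)) =>
        if h : (i : ℕ) < m then Ahat ⟨i, h⟩ j else k j).det = 1) :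
    Function.Injective (fun Jhat : Fin m → ℝ => eproj k (Ahatᵀ.mulVec Jhat)) ∧
      Set.range (fun Jhat : Fin m → ℝ => eproj k (Ahatᵀ.mulVec Jhat)) =
        {y : Fin (m + 1) → ℝ | edot y k = 0} :=
  stmt_2_general m k hk Ahat hdet
end

section
/- Let α > 0, 𝙺 ≥ 1, k ∈ ℤⁿ_*, and D̂ ⊆ ℝ^{n−1} any set, and define Ẑ := {Ĵ ∈ D̂ : |(π_k^⊥(Âᵀ Ĵ))·l| ≥ 3α𝙺‖l‖/‖k‖ for every l ∈ ℤⁿ_{*,𝙺} with l ∉ ℤk} and Z := Ẑ × (−α/κ, α/κ). Then for every y ∈ L(Z) and every l ∈ ℤⁿ with l ∉ ℤk and |l|₁ ≤ 𝙺 one has |y·l| ≥ 2α𝙺/‖k‖. -/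
open scoped Matrix

/-- Nonzero integer vectors whose first nonzero component is positive. -/
def ZSharp {n : ℕ} (k : Fin n → ℤ) : Prop :=
  ∃ j, 0 < k j ∧ ∀ i, i < j → k i = 0

/-- Generators of one-dimensional maximal lattices: `ℤⁿ_*`. -/
def ZStar {n : ℕ} (k : Fin n → ℤ) : Prop :=
  ZSharp k ∧ Finset.univ.gcd k = 1

/-- The 1-norm `|k|₁ = ∑ |k_i|` of an integer vector. -/
def onormZ {n : ℕ} (k : Fin n → ℤ) : ℤ := ∑ i, |k i|

/-- Euclidean norm on `Fin n → ℝ`. -/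
noncomputable def enorm' {n : ℕ} (y : Fin n → ℝ) : ℝ := Real.sqrt (∑ i, y i ^ 2)

/-- The real vector associated with an integer vector. -/
def intR {n : ℕ} (k : Fin n → ℤ) : Fin n → ℝ := fun i => (k i : ℝ)

/-- `κ = ‖k‖²` for an integer vector `k`. -/
noncomputable def ksq {n : ℕ} (k : Fin n → ℤ) : ℝ := ∑ i, ((k i : ℝ)) ^ 2

/-- An integer matrix viewed as a real matrix. -/
def matR {m n : ℕ} (B : Matrix (Fin m) (Fin n) ℤ) : Matrix (Fin m) (Fin n) ℝ :=
  Matrix.of fun i j => (B i j : ℝ)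

lemma edot_cs' {n : ℕ} (x y : Fin n → ℝ) : |edot x y| ≤ enorm' x * enorm' y := by
  rw [← Real.sqrt_sq_eq_abs, enorm', enorm', ← Real.sqrt_mul (by positivity)]
  exact Real.sqrt_le_sqrt (Finset.sum_mul_sq_le_sq_mul_sq _ _ _)

lemma edot_add_left' {n : ℕ} (x z v : Fin n → ℝ) :
    edot (x + z) v = edot x v + edot z v := by
  simp [edot, add_mul, Finset.sum_add_distrib]

lemma edot_smul_left' {n : ℕ} (c : ℝ) (x v : Fin n → ℝ) :
    edot (c • x) v = c * edot x v := by
  simp [edot, Finset.mul_sum, mul_assoc]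

lemma one_le_enorm'_int {n : ℕ} (v : Fin n → ℤ) (j : Fin n) (hv : v j ≠ 0) :
    1 ≤ enorm' (intR v) := by
  rw [enorm', Real.one_le_sqrt]
  calc (1:ℝ) ≤ (intR v j)^2 := by
        show (1:ℝ) ≤ ((v j:ℝ))^2
        have h1 : (1:ℤ) ≤ |v j| := Int.one_le_abs hv
        have h2 : (1:ℝ) ≤ |(v j : ℝ)| := by exact_mod_cast h1
        nlinarith [sq_abs ((v j:ℝ)), mul_le_mul h2 h2 zero_le_one (abs_nonneg ((v j:ℝ)))]
    _ ≤ ∑ i, (intR v i)^2 :=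
        Finset.single_le_sum (f := fun i => (intR v i)^2)
          (fun i _ => sq_nonneg _) (Finset.mem_univ j)

theorem stmt_7 (m : ℕ) (hm : 1 ≤ m) (α KK : ℝ) (hα : 0 < α) (hKK : 1 ≤ KK)
    (k : Fin (m + 1) → ℤ) (hk : ZStar k)
    (Ahat : Matrix (Fin m) (Fin (m + 1)) ℤ)
    (hdet : (Matrix.of fun (i j : Fin (m + 1)) =>
        if h : (i : ℕ) < m then Ahat ⟨i, h⟩ j else k j).det = 1)
    (Dhat : Set (Fin m → ℝ))
    (y : Fin (m + 1) → ℝ)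
    (hy : y ∈ (fun p : (Fin m → ℝ) × ℝ =>
        p.2 • intR k + eproj (intR k) ((matR Ahat)ᵀ.mulVec p.1)) ''
      {p : (Fin m → ℝ) × ℝ |
        (p.1 ∈ Dhat ∧
          ∀ l : Fin (m + 1) → ℤ, ZStar l → (onormZ l : ℝ) ≤ KK →
            (¬∃ c : ℤ, l = c • k) →
            3 * α * KK * enorm' (intR l) / enorm' (intR k) ≤
              |edot (eproj (intR k) ((matR Ahat)ᵀ.mulVec p.1)) (intR l)|) ∧
        |p.2| < α / ksq k})
    (l : Fin (m + 1) → ℤ) (hl : ¬∃ c : ℤ, l = c • k)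
    (hl1 : (onormZ l : ℝ) ≤ KK) :
    2 * α * KK / enorm' (intR k) ≤ |edot y (intR l)| := by
  obtain ⟨p, ⟨⟨hD, hP⟩, ht⟩, rfl⟩ := hy
  set P := eproj (intR k) ((matR Ahat)ᵀ.mulVec p.1) with hPdef
  -- facts about k
  obtain ⟨⟨jk, hjk, -⟩, -⟩ := hk
  have hnk1 : 1 ≤ enorm' (intR k) := one_le_enorm'_int k jk hjk.ne'
  have hnk0 : 0 < enorm' (intR k) := lt_of_lt_of_le one_pos hnk1
  have hksq : ksq k = enorm' (intR k) ^ 2 := by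
    rw [ksq, enorm', Real.sq_sqrt (by positivity)]
    rfl
  -- l is nonzero; first nonzero index
  have hl0 : ∃ j, l j ≠ 0 := by
    by_contra h
    push_neg at h
    exact hl ⟨0, funext fun i => by simp [h i]⟩
  set S := Finset.univ.filter (fun j => l j ≠ 0) with hSdef
  have hSne : S.Nonempty := by
    obtain ⟨j, hj⟩ := hl0
    exact ⟨j, by simp [hSdef, hj]⟩
  set j₀ := S.min' hSne with hj₀def
  have hj₀ : l j₀ ≠ 0 := by
    have := S.min'_mem hSne
    simp only [hSdef, Finset.mem_filter, Finset.mem_univ, true_and] at this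
    exact this
  have hmin : ∀ i, i < j₀ → l i = 0 := by
    intro i hi
    by_contra h
    exact absurd (S.min'_le i (by simp [hSdef, h])) (not_le.2 hi)
  -- gcd
  set g := Finset.univ.gcd l with hgdef
  have hgdvd : ∀ i, g ∣ l i := fun i => Finset.gcd_dvd (Finset.mem_univ i)
  have hg0 : g ≠ 0 := by
    rw [hgdef, Ne, Finset.gcd_eq_zero_iff]
    push_neg
    exact ⟨j₀, Finset.mem_univ _, hj₀⟩
  have hgnn : 0 ≤ g := Int.nonneg_of_normalize_eq_self Finset.normalize_gcd
  have hg1 : 1 ≤ g := by omega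
  -- sign
  set ε := Int.sign (l j₀) with hεdef
  have hεc : ε = 1 ∨ ε = -1 := by
    rcases lt_trichotomy (l j₀) 0 with h|h|h
    · right; rw [hεdef]; exact Int.sign_eq_neg_one_iff_neg.2 h
    · exact absurd h hj₀
    · left; rw [hεdef]; exact Int.sign_eq_one_iff_pos.2 h
  have hε2 : ε * ε = 1 := by rcases hεc with h|h <;> simp [h]
  -- the reduced vector
  set l' : Fin (m+1) → ℤ := fun i => ε * (l i / g) with hl'def
  have hrepr : ∀ i, l i = (ε * g) * l' i := by
    intro i
    have hdc : g * (l i / g) = l i := Int.mul_ediv_cancel' (hgdvd i)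
    calc l i = (ε*ε) * (g * (l i / g)) := by rw [hε2, hdc, one_mul]
    _ = (ε*g) * l' i := by simp only [hl'def]; ring
  have hag : |ε * g| = g := by
    rcases hεc with h|h <;> simp [h, abs_of_nonneg hgnn]
  have hεl : 0 < ε * l j₀ := by
    rcases lt_trichotomy (l j₀) 0 with h|h|h
    · have he : ε = -1 := by rw [hεdef]; exact Int.sign_eq_neg_one_iff_neg.2 h
      rw [he]; omega
    · exact absurd h hj₀
    · have he : ε = 1 := by rw [hεdef]; exact Int.sign_eq_one_iff_pos.2 h
      rw [he]; omega
  have hgl' : g * l' j₀ = ε * l j₀ := by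
    simp only [hl'def]
    calc g * (ε * (l j₀ / g)) = ε * (g * (l j₀ / g)) := by ring
    _ = ε * l j₀ := by rw [Int.mul_ediv_cancel' (hgdvd j₀)]
  have hl'j₀ : 0 < l' j₀ := by nlinarith [hgl', hεl, hg1]
  have hZl' : ZStar l' := by
    constructor
    · exact ⟨j₀, hl'j₀, fun i hi => by simp [hl'def, hmin i hi]⟩
    · have h1 : g = normalize (ε * g) * Finset.univ.gcd l' := by
        calc g = Finset.univ.gcd (fun i => (ε*g) * l' i) :=
              Finset.gcd_congr rfl (fun i _ => hrepr i)
        _ = normalize (ε * g) * Finset.univ.gcd l' := Finset.gcd_mul_left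
      have h2 : normalize (ε*g) = g := by rw [← Int.abs_eq_normalize, hag]
      rw [h2] at h1
      exact (mul_left_cancel₀ hg0 (by rw [← h1, mul_one] : g * 1 = g * Finset.univ.gcd l')).symm
  have hl'k : ¬∃ c : ℤ, l' = c • k := by
    rintro ⟨c, hc⟩
    refine hl ⟨ε*g*c, funext fun i => ?_⟩
    rw [hrepr i, congrFun hc i]
    simp only [Pi.smul_apply, smul_eq_mul]
    ring
  -- 1-norm comparison
  have honorm : onormZ l' ≤ onormZ l := by
    apply Finset.sum_le_sum
    intro i _
    have habs : |l i| = |ε*g| * |l' i| := by rw [hrepr i, abs_mul]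
    rw [habs, hag]
    nlinarith [abs_nonneg (l' i)]
  have hK' : (onormZ l' : ℝ) ≤ KK := le_trans (by exact_mod_cast honorm) hl1
  have hPl' := hP l' hZl' hK' hl'k
  -- norms of l'
  set nl := enorm' (intR l') with hnl
  have hnl1 : 1 ≤ nl := one_le_enorm'_int l' j₀ hl'j₀.ne'
  have hcs : |edot (intR k) (intR l')| ≤ enorm' (intR k) * nl := edot_cs' _ _
  have hksqpos : 0 < ksq k := by rw [hksq]; positivity
  have hsplit : edot (p.2 • intR k + P) (intR l') =
      p.2 * edot (intR k) (intR l') + edot P (intR l') := by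
    rw [edot_add_left', edot_smul_left']
  have hT : |p.2 * edot (intR k) (intR l')| ≤ α * nl / enorm' (intR k) := by
    rw [abs_mul]
    calc |p.2| * |edot (intR k) (intR l')| ≤ (α / ksq k) * (enorm' (intR k) * nl) :=
          mul_le_mul ht.le hcs (abs_nonneg _) (le_of_lt (div_pos hα hksqpos))
    _ = α * nl / enorm' (intR k) := by
        rw [hksq]
        field_simp
  have htri : |edot P (intR l')| - |p.2 * edot (intR k) (intR l')| ≤
      |edot (p.2 • intR k + P) (intR l')| := by
    rw [hsplit]
    have h := abs_sub (p.2 * edot (intR k) (intR l') + edot P (intR l'))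
      (p.2 * edot (intR k) (intR l'))
    rw [add_sub_cancel_left] at h
    linarith
  have key : 2*α*KK / enorm' (intR k) ≤ |edot (p.2 • intR k + P) (intR l')| := by
    have h2 : 2*α*KK ≤ 3*α*KK*nl - α*nl := by
      nlinarith [mul_nonneg (mul_nonneg hα.le (le_trans zero_le_one hKK)) (sub_nonneg.2 hnl1),
        mul_nonneg (mul_nonneg hα.le (le_trans zero_le_one hnl1)) (sub_nonneg.2 hKK)]
    have hmain : 2*α*KK / enorm' (intR k) ≤
        3*α*KK*nl/enorm' (intR k) - α*nl/enorm' (intR k) := by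
      rw [div_sub_div_same]
      exact (div_le_div_iff_of_pos_right hnk0).2 h2
    linarith [htri, hPl', hT, hmain]
  -- back to l
  have hfac : edot (p.2 • intR k + P) (intR l) =
      ((ε*g : ℤ):ℝ) * edot (p.2 • intR k + P) (intR l') := by
    rw [edot, edot, Finset.mul_sum]
    apply Finset.sum_congr rfl
    intro i _
    have hcast : intR l i = ((ε*g:ℤ):ℝ) * intR l' i := by
      show ((l i : ℤ):ℝ) = ((ε*g:ℤ):ℝ) * ((l' i : ℤ):ℝ)
      rw [hrepr i]; push_cast; ring
    rw [hcast]; ring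
  have hge1 : (1:ℝ) ≤ |((ε*g:ℤ):ℝ)| := by
    rw [← Int.cast_abs, hag]
    exact_mod_cast hg1
  calc 2*α*KK / enorm' (intR k)
      ≤ |edot (p.2 • intR k + P) (intR l')| := key
    _ ≤ |((ε*g:ℤ):ℝ)| * |edot (p.2 • intR k + P) (intR l')| :=
        le_mul_of_one_le_left (abs_nonneg _) hge1
    _ = |edot (p.2 • intR k + P) (intR l)| := by rw [hfac, abs_mul]
end

section
/- Let s₀ > 0 and let F be holomorphic on the strip S := {z ∈ ℂ : |Im z| < s₀}, 2π-periodic (F(z+2π) = F(z)), real-valued on ℝ, and γ-cosine-like, i.e. sup_{z∈S}|F(z) + cos z| ≤ γ for some 0 < γ ≤ (1/4)·min{1, s₀²}. Then: (i) |F'(x)| + |F''(x)| ≥ 1/4 for every x ∈ ℝ; (ii) sup_{z∈S}|F(z)| ≤ γ + cosh s₀; (iii) F has exactly two critical points in (−π, π], both nondegenerate (F'' ≠ 0 there): a local minimum lying in (−π/6, π/6) and a local maximum lying in (−π, −5π/6) ∪ (5π/6, π]; moreover F' ≥ 1/4 on [π/6, 5π/6] and F' ≤ −1/4 on [−5π/6,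 −π/6]; (iv) the two critical values differ by at least 1/4. -/
/-- The restriction of `F : ℂ → ℂ` to the reals, taking real parts. -/
noncomputable def reRestrict (F : ℂ → ℂ) : ℝ → ℝ := fun x => (F x).re

/-!
Write `F = -cos + g` with `‖g‖ ≤ γ` on the strip. Cauchy's estimates on discs of radius `s₀`
centred on the real axis bound `g'` and `g''` on `ℝ` by `γ / s₀ ≤ 1/4` and `2γ / s₀² ≤ 1/2`, so on
`ℝ` the function `f = Re F` and its first two derivatives stay close to `-cos`, `sin` and `cos`.
Hence `f'` has the sign of `sin` away from the zeros of `sin`, while near them `f''` has the sign of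
`cos`, so `f'` is strictly monotone there and vanishes exactly once. Which side of `π` the maximum
lies on is decided by the sign of `f' π`.
-/

open Set Real Metric Filter Topology

theorem Complex.norm_cos_le_cosh_im (z : ℂ) : ‖cos z‖ ≤ Real.cosh z.im :=
  calc ‖cos z‖ = ‖exp (z * I) + exp (-z * I)‖ / 2 := by rw [Complex.cos, norm_div, Complex.norm_two]
    _ ≤ (‖exp (z * I)‖ + ‖exp (-z * I)‖) / 2 := by gcongr; exact norm_add_le _ _
    _ = Real.cosh z.im := by simp [norm_exp, Real.cosh_eq, add_comm]

theorem one_le_abs_sin_add_abs_cos (x : ℝ) : 1 ≤ |sin x| + |cos x| := by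
  nlinarith [sin_sq_add_cos_sq x, sq_abs (sin x), sq_abs (cos x), abs_nonneg (sin x),
    abs_nonneg (cos x), abs_sin_le_one x, abs_cos_le_one x]

theorem one_half_le_sin_of_mem_Icc {x : ℝ} (hx : x ∈ Icc (π / 6) (5 * π / 6)) : 1 / 2 ≤ sin x := by
  rw [← cos_pi_div_three, ← cos_pi_div_two_sub, ← cos_abs (π / 2 - x)]
  exact cos_le_cos_of_nonneg_of_le_pi (abs_nonneg _) (by linarith [pi_pos])
    (abs_le.2 ⟨by linarith [hx.2], by linarith [hx.1]⟩)

theorem sqrt_three_div_two_le_cos {x : ℝ} (hx : |x| ≤ π / 6) : √3 / 2 ≤ cos x := by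
  rw [← cos_pi_div_six, ← cos_abs x]
  exact cos_le_cos_of_nonneg_of_le_pi (abs_nonneg _) (by linarith [pi_pos]) hx

theorem cos_le_neg_sqrt_three_div_two {x : ℝ} (h₁ : 5 * π / 6 ≤ |x|) (h₂ : |x| ≤ 7 * π / 6) :
    cos x ≤ -(√3 / 2) := by
  have : √3 / 2 ≤ cos (|x| - π) := sqrt_three_div_two_le_cos (abs_le.2 ⟨by linarith, by linarith⟩)
  rwa [cos_sub_pi, cos_abs, le_neg] at this

theorem one_lt_sqrt_three : 1 < √3 := by
  rw [lt_sqrt zero_le_one]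
  norm_num

theorem Complex.norm_iteratedDeriv_le_of_forall_mem_ball_norm_le {E : Type*} [NormedAddCommGroup E]
    [NormedSpace ℂ E] [CompleteSpace E] {g : ℂ → E} {c : ℂ} {s C : ℝ} (n : ℕ) (hs : 0 < s)
    (hg : DifferentiableOn ℂ g (ball c s)) (hC : ∀ z ∈ ball c s, ‖g z‖ ≤ C) :
    ‖iteratedDeriv n g c‖ ≤ n.factorial * C / s ^ n := by
  have hlim : Tendsto (fun R : ℝ => n.factorial * C / R ^ n) (𝓝[<] s)
      (𝓝 (n.factorial * C / s ^ n)) :=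
    tendsto_nhdsWithin_of_tendsto_nhds <|
      (continuousAt_const.div (continuousAt_pow s n) (pow_ne_zero n hs.ne')).tendsto
  refine ge_of_tendsto hlim ?_
  filter_upwards [Ioo_mem_nhdsLT hs] with R hR
  have hRs : closedBall c R ⊆ ball c s := closedBall_subset_ball hR.2
  exact Complex.norm_iteratedDeriv_le_of_forall_mem_sphere_norm_le n hR.1
    (hg.diffContOnCl_ball hRs) fun z hz => hC z (hRs (sphere_subset_closedBall hz))

theorem Complex.abs_im_lt_of_mem_ball_ofReal {x : ℝ} {s : ℝ} {z : ℂ} (hz : z ∈ ball (x : ℂ) s) :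
    |z.im| < s := by
  simpa using (Complex.abs_im_le_norm (z - x)).trans_lt (mem_ball_iff_norm.1 hz)

theorem analyticOnNhd_of_forall_abs_im_lt {g : ℂ → ℂ} {s : ℝ}
    (hg : ∀ z : ℂ, |z.im| < s → DifferentiableAt ℂ g z) :
    AnalyticOnNhd ℂ g {z : ℂ | |z.im| < s} :=
  DifferentiableOn.analyticOnNhd (fun z hz => (hg z hz).differentiableWithinAt)
    (isOpen_lt Complex.continuous_im.abs continuous_const)

theorem AnalyticOnNhd.differentiableAt_iteratedDeriv {𝕜 E : Type*} [NontriviallyNormedField 𝕜]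
    [NormedAddCommGroup E] [NormedSpace 𝕜 E] [CompleteSpace E] {f : 𝕜 → E} {U : Set 𝕜}
    (hf : AnalyticOnNhd 𝕜 f U) (n : ℕ) {x : 𝕜} (hx : x ∈ U) :
    DifferentiableAt 𝕜 (iteratedDeriv n f) x := by
  rw [iteratedDeriv_eq_iterate]
  exact (hf.iterated_deriv n x hx).differentiableAt

theorem hasDerivAt_reRestrict {F : ℂ → ℂ} {x : ℝ} (h : DifferentiableAt ℂ F x) :
    HasDerivAt (reRestrict F) (reRestrict (deriv F) x) x :=
  h.hasDerivAt.real_of_complex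

theorem iteratedDeriv_reRestrict {F : ℂ → ℂ} {U : Set ℂ} (hF : AnalyticOnNhd ℂ F U)
    (hU : ∀ x : ℝ, (x : ℂ) ∈ U) (n : ℕ) :
    iteratedDeriv n (reRestrict F) = reRestrict (iteratedDeriv n F) := by
  induction n with
  | zero => simp
  | succ n ih =>
    rw [iteratedDeriv_succ, iteratedDeriv_succ, ih]
    exact funext fun x => (hasDerivAt_reRestrict (hF.differentiableAt_iteratedDeriv n (hU x))).deriv

theorem differentiable_iteratedDeriv_reRestrict {F : ℂ → ℂ} {U : Set ℂ}
    (hF : AnalyticOnNhd ℂ F U) (hU : ∀ x : ℝ, (x : ℂ) ∈ U) (n : ℕ) :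
    Differentiable ℝ (iteratedDeriv n (reRestrict F)) := by
  rw [iteratedDeriv_reRestrict hF hU]
  exact fun x =>
    (hasDerivAt_reRestrict (hF.differentiableAt_iteratedDeriv n (hU x))).differentiableAt

theorem abs_iteratedDeriv_reRestrict_le {g : ℂ → ℂ} {s C : ℝ} (hs : 0 < s)
    (hg : ∀ z : ℂ, |z.im| < s → DifferentiableAt ℂ g z) (hC : ∀ z : ℂ, |z.im| < s → ‖g z‖ ≤ C)
    (n : ℕ) (x : ℝ) : |iteratedDeriv n (reRestrict g) x| ≤ n.factorial * C / s ^ n := by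
  rw [iteratedDeriv_reRestrict (analyticOnNhd_of_forall_abs_im_lt hg) fun x => by simpa using hs]
  exact (Complex.abs_re_le_norm _).trans <|
    Complex.norm_iteratedDeriv_le_of_forall_mem_ball_norm_le n hs
      (fun z hz => (hg z (Complex.abs_im_lt_of_mem_ball_ofReal hz)).differentiableWithinAt)
      fun z hz => hC z (Complex.abs_im_lt_of_mem_ball_ofReal hz)

theorem Function.Periodic.deriv {𝕜 E : Type*} [NontriviallyNormedField 𝕜] [NormedAddCommGroup E]
    [NormedSpace 𝕜 E] {f : 𝕜 → E} {c : 𝕜} (hf : Function.Periodic f c) :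
    Function.Periodic (deriv f) c := fun x => by
  rw [← deriv_comp_add_const, hf.funext]

theorem exists_isLocalMin_of_strictMonoOn_deriv {f : ℝ → ℝ} {u v : ℝ} (huv : u ≤ v)
    (hf : Differentiable ℝ f) (hmono : StrictMonoOn (deriv f) (Icc u v))
    (hcont : ContinuousOn (deriv f) (Icc u v)) (hu : deriv f u < 0) (hv : 0 < deriv f v) :
    ∃ a ∈ Ioo u v, deriv f a = 0 ∧ IsLocalMin f a := by
  obtain ⟨a, ha, ha0⟩ := intermediate_value_Ioo huv hcont ⟨hu, hv⟩
  have haIcc : a ∈ Icc u v := Ioo_subset_Icc_self ha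
  refine ⟨a, ha, ha0, isLocalMin_of_deriv_Ioo ha.1 ha.2 hf.continuous.continuousAt
    (fun x _ => (hf x).differentiableWithinAt) (fun x _ => (hf x).differentiableWithinAt)
    (fun x hx => ?_) (fun x hx => ?_)⟩
  · rw [← ha0]
    exact (hmono ⟨hx.1.le, hx.2.le.trans haIcc.2⟩ haIcc hx.2).le
  · rw [← ha0]
    exact (hmono haIcc ⟨haIcc.1.trans hx.1.le, hx.2.le⟩ hx.1).le

theorem exists_isLocalMax_of_strictAntiOn_deriv {f : ℝ → ℝ} {u v : ℝ} (huv : u ≤ v)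
    (hf : Differentiable ℝ f) (hanti : StrictAntiOn (deriv f) (Icc u v))
    (hcont : ContinuousOn (deriv f) (Icc u v)) (hu : 0 < deriv f u) (hv : deriv f v < 0) :
    ∃ b ∈ Ioo u v, deriv f b = 0 ∧ IsLocalMax f b := by
  have hderiv : deriv (-f) = -deriv f := funext fun x => deriv.neg
  obtain ⟨b, hb, hb0, hbmin⟩ := exists_isLocalMin_of_strictMonoOn_deriv huv hf.neg
    (by rw [hderiv]; exact hanti.neg) (by rw [hderiv]; exact hcont.neg)
    (by rw [hderiv]; exact neg_neg_of_pos hu) (by rw [hderiv]; exact neg_pos_of_neg hv)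
  exact ⟨b, hb, by simpa [hderiv] using hb0, by simpa using hbmin.neg⟩

/-- The bounds on `ℝ` that Cauchy's estimates give for a `γ`-cosine-like `F` with
`γ ≤ min 1 s₀² / 4`. -/
structure IsCosineLike (f : ℝ → ℝ) : Prop where
  differentiable : Differentiable ℝ f
  differentiable_deriv : Differentiable ℝ (deriv f)
  periodic_deriv : Function.Periodic (deriv f) (2 * π)
  abs_add_cos_le (x : ℝ) : |f x + cos x| ≤ 1 / 4
  abs_deriv_sub_sin_le (x : ℝ) : |deriv f x - sin x| ≤ 1 / 4
  abs_deriv_deriv_sub_cos_le (x : ℝ) : |deriv (deriv f) x - cos x| ≤ 1 / 2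

namespace IsCosineLike

variable {f : ℝ → ℝ}

theorem one_fourth_le_abs_deriv_add_abs_deriv_deriv (hf : IsCosineLike f) (x : ℝ) :
    1 / 4 ≤ |deriv f x| + |deriv (deriv f) x| := by
  have h₁ := abs_sub_abs_le_abs_sub (sin x) (deriv f x)
  have h₂ := abs_sub_abs_le_abs_sub (cos x) (deriv (deriv f) x)
  rw [abs_sub_comm] at h₁ h₂
  linarith [one_le_abs_sin_add_abs_cos x, hf.abs_deriv_sub_sin_le x,
    hf.abs_deriv_deriv_sub_cos_le x]

theorem one_fourth_le_deriv (hf : IsCosineLike f) {x : ℝ} (hx : x ∈ Icc (π / 6) (5 * π / 6)) :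
    1 / 4 ≤ deriv f x := by
  linarith [abs_le.1 (hf.abs_deriv_sub_sin_le x), one_half_le_sin_of_mem_Icc hx]

theorem deriv_le_neg_one_fourth (hf : IsCosineLike f) {x : ℝ}
    (hx : x ∈ Icc (-(5 * π / 6)) (-(π / 6))) : deriv f x ≤ -(1 / 4) := by
  have := one_half_le_sin_of_mem_Icc (x := -x) ⟨by linarith [hx.2], by linarith [hx.1]⟩
  rw [sin_neg] at this
  linarith [abs_le.1 (hf.abs_deriv_sub_sin_le x)]

theorem deriv_deriv_pos (hf : IsCosineLike f) {x : ℝ} (hx : |x| ≤ π / 6) :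
    0 < deriv (deriv f) x := by
  linarith [abs_le.1 (hf.abs_deriv_deriv_sub_cos_le x), sqrt_three_div_two_le_cos hx,
    one_lt_sqrt_three]

theorem deriv_deriv_neg (hf : IsCosineLike f) {x : ℝ} (h₁ : 5 * π / 6 ≤ |x|)
    (h₂ : |x| ≤ 7 * π / 6) : deriv (deriv f) x < 0 := by
  linarith [abs_le.1 (hf.abs_deriv_deriv_sub_cos_le x), cos_le_neg_sqrt_three_div_two h₁ h₂,
    one_lt_sqrt_three]

theorem exists_isLocalMin (hf : IsCosineLike f) :
    ∃ a ∈ Ioo (-(π / 6)) (π / 6), deriv f a = 0 ∧ deriv (deriv f) a ≠ 0 ∧ IsLocalMin f a ∧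
      f a ≤ 1 / 4 - √3 / 2 ∧ ∀ x ∈ Ioo (-(π / 6)) (π / 6), deriv f x = 0 → x = a := by
  have hcont := hf.differentiable_deriv.continuous.continuousOn (s := Icc (-(π / 6)) (π / 6))
  have hmono : StrictMonoOn (deriv f) (Icc (-(π / 6)) (π / 6)) :=
    strictMonoOn_of_deriv_pos (convex_Icc _ _) hcont fun _ hx => by
      rw [interior_Icc] at hx
      exact hf.deriv_deriv_pos (abs_le.2 ⟨hx.1.le, hx.2.le⟩)
  have hπ := pi_pos
  obtain ⟨a, ha, ha0, hmin⟩ := exists_isLocalMin_of_strictMonoOn_deriv (by linarith)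
    hf.differentiable hmono hcont
    (by linarith [hf.deriv_le_neg_one_fourth (x := -(π / 6)) ⟨by linarith, le_rfl⟩])
    (by linarith [hf.one_fourth_le_deriv (x := π / 6) ⟨le_rfl, by linarith⟩])
  have habs : |a| ≤ π / 6 := abs_le.2 ⟨ha.1.le, ha.2.le⟩
  refine ⟨a, ha, ha0, (hf.deriv_deriv_pos habs).ne', hmin, ?_, fun x hx hx0 =>
    hmono.injOn (Ioo_subset_Icc_self hx) (Ioo_subset_Icc_self ha) (hx0.trans ha0.symm)⟩
  linarith [abs_le.1 (hf.abs_add_cos_le a), sqrt_three_div_two_le_cos habs]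

theorem strictAntiOn_deriv (hf : IsCosineLike f) {u v : ℝ}
    (h : Icc u v ⊆ {x | 5 * π / 6 ≤ |x| ∧ |x| ≤ 7 * π / 6}) :
    StrictAntiOn (deriv f) (Icc u v) :=
  strictAntiOn_of_deriv_neg (convex_Icc _ _) hf.differentiable_deriv.continuous.continuousOn
    fun _ hx => hf.deriv_deriv_neg (h (interior_subset hx)).1 (h (interior_subset hx)).2

theorem deriv_neg_pi (hf : IsCosineLike f) : deriv f (-π) = deriv f π := by
  simpa [show -π + 2 * π = π by ring] using (hf.periodic_deriv (-π)).symm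

theorem strictAntiOn_deriv_Icc_pos (hf : IsCosineLike f) :
    StrictAntiOn (deriv f) (Icc (5 * π / 6) (7 * π / 6)) :=
  hf.strictAntiOn_deriv fun _ hx =>
    ⟨le_abs.2 (Or.inl hx.1), abs_le.2 ⟨by linarith [pi_pos, hx.1], hx.2⟩⟩

theorem strictAntiOn_deriv_Icc_neg (hf : IsCosineLike f) :
    StrictAntiOn (deriv f) (Icc (-(7 * π / 6)) (-(5 * π / 6))) :=
  hf.strictAntiOn_deriv fun _ hx =>
    ⟨le_abs.2 (Or.inr (by linarith [hx.2])), abs_le.2 ⟨hx.1, by linarith [pi_pos, hx.2]⟩⟩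

theorem exists_isLocalMax_of_deriv_pi_nonpos (hf : IsCosineLike f) (hπ : deriv f π ≤ 0) :
    ∃ b ∈ Ioo (-π) (-(5 * π / 6)) ∪ Ioc (5 * π / 6) π, deriv f b = 0 ∧ IsLocalMax f b ∧
      ∀ x ∈ Ioo (-π) (-(5 * π / 6)) ∪ Ioc (5 * π / 6) π, deriv f x = 0 → x = b := by
  have := pi_pos
  have hv : deriv f (7 * π / 6) < 0 := by
    have h := hf.periodic_deriv (-(5 * π / 6))
    rw [show -(5 * π / 6) + 2 * π = 7 * π / 6 by ring] at h
    linarith [hf.deriv_le_neg_one_fourth (x := -(5 * π / 6)) ⟨le_rfl, by linarith⟩]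
  obtain ⟨b, hb, hb0, hbmax⟩ := exists_isLocalMax_of_strictAntiOn_deriv (by linarith)
    hf.differentiable hf.strictAntiOn_deriv_Icc_pos hf.differentiable_deriv.continuous.continuousOn
    (by linarith [hf.one_fourth_le_deriv (x := 5 * π / 6) ⟨by linarith, le_rfl⟩]) hv
  have hbπ : b ≤ π := not_lt.1 fun h => by
    linarith [hf.strictAntiOn_deriv_Icc_pos ⟨by linarith, by linarith⟩ (Ioo_subset_Icc_self hb) h]
  refine ⟨b, Or.inr ⟨hb.1, hbπ⟩, hb0, hbmax, ?_⟩
  rintro x (hx | hx) hx0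
  · have := hf.strictAntiOn_deriv_Icc_neg ⟨by linarith, by linarith⟩
      ⟨by linarith [hx.1], hx.2.le⟩ hx.1
    linarith [hf.deriv_neg_pi]
  · exact hf.strictAntiOn_deriv_Icc_pos.injOn ⟨hx.1.le, by linarith [hx.2]⟩
      (Ioo_subset_Icc_self hb) (hx0.trans hb0.symm)

theorem exists_isLocalMax_of_deriv_pi_pos (hf : IsCosineLike f) (hπ : 0 < deriv f π) :
    ∃ b ∈ Ioo (-π) (-(5 * π / 6)) ∪ Ioc (5 * π / 6) π, deriv f b = 0 ∧ IsLocalMax f b ∧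
      ∀ x ∈ Ioo (-π) (-(5 * π / 6)) ∪ Ioc (5 * π / 6) π, deriv f x = 0 → x = b := by
  have := pi_pos
  have hu : 0 < deriv f (-(7 * π / 6)) := by
    have h := hf.periodic_deriv (-(7 * π / 6))
    rw [show -(7 * π / 6) + 2 * π = 5 * π / 6 by ring] at h
    linarith [hf.one_fourth_le_deriv (x := 5 * π / 6) ⟨by linarith, le_rfl⟩]
  obtain ⟨b, hb, hb0, hbmax⟩ := exists_isLocalMax_of_strictAntiOn_deriv (by linarith)
    hf.differentiable hf.strictAntiOn_deriv_Icc_neg hf.differentiable_deriv.continuous.continuousOn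
    hu (by linarith [hf.deriv_le_neg_one_fourth (x := -(5 * π / 6)) ⟨le_rfl, by linarith⟩])
  have hbπ : -π < b := not_le.1 fun h => by
    linarith [hf.strictAntiOn_deriv_Icc_neg.antitoneOn (Ioo_subset_Icc_self hb)
      ⟨by linarith, by linarith⟩ h, hf.deriv_neg_pi]
  refine ⟨b, Or.inl ⟨hbπ, hb.2⟩, hb0, hbmax, ?_⟩
  rintro x (hx | hx) hx0
  · exact hf.strictAntiOn_deriv_Icc_neg.injOn ⟨by linarith [hx.1], hx.2.le⟩
      (Ioo_subset_Icc_self hb) (hx0.trans hb0.symm)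
  · have := hf.strictAntiOn_deriv_Icc_pos.antitoneOn ⟨hx.1.le, by linarith [hx.2]⟩
      ⟨by linarith, by linarith⟩ hx.2
    linarith

theorem exists_isLocalMax (hf : IsCosineLike f) :
    ∃ b ∈ Ioo (-π) (-(5 * π / 6)) ∪ Ioc (5 * π / 6) π, deriv f b = 0 ∧
      deriv (deriv f) b ≠ 0 ∧ IsLocalMax f b ∧ √3 / 2 - 1 / 4 ≤ f b ∧
      ∀ x ∈ Ioo (-π) (-(5 * π / 6)) ∪ Ioc (5 * π / 6) π, deriv f x = 0 → x = b := by
  obtain ⟨b, hb, hb0, hbmax, huniq⟩ := (le_or_gt (deriv f π) 0).elim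
    hf.exists_isLocalMax_of_deriv_pi_nonpos hf.exists_isLocalMax_of_deriv_pi_pos
  have hπ := pi_pos
  have h₁ : 5 * π / 6 ≤ |b| := by
    rcases hb with hb | hb
    · exact le_abs.2 (Or.inr (by linarith [hb.2]))
    · exact le_abs.2 (Or.inl hb.1.le)
  have h₂ : |b| ≤ 7 * π / 6 :=
    abs_le.2 (by rcases hb with hb | hb <;> constructor <;> linarith [hb.1, hb.2])
  refine ⟨b, hb, hb0, (hf.deriv_deriv_neg h₁ h₂).ne, hbmax, ?_, huniq⟩
  linarith [abs_le.1 (hf.abs_add_cos_le b), cos_le_neg_sqrt_three_div_two h₁ h₂]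

theorem exists_critical_points (hf : IsCosineLike f) :
    ∃ a b : ℝ, a ∈ Ioo (-(π / 6)) (π / 6) ∧
      (b ∈ Ioo (-π) (-(5 * π / 6)) ∨ b ∈ Ioc (5 * π / 6) π) ∧
      deriv f a = 0 ∧ deriv f b = 0 ∧ deriv (deriv f) a ≠ 0 ∧ deriv (deriv f) b ≠ 0 ∧
      IsLocalMin f a ∧ IsLocalMax f b ∧
      (∀ x ∈ Ioc (-π) π, deriv f x = 0 → x = a ∨ x = b) ∧ 1 / 4 ≤ |f a - f b| := by
  obtain ⟨a, ha, ha0, ha2, hamin, hfa, hunique_a⟩ := hf.exists_isLocalMin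
  obtain ⟨b, hb, hb0, hb2, hbmax, hfb, hunique_b⟩ := hf.exists_isLocalMax
  refine ⟨a, b, ha, hb, ha0, hb0, ha2, hb2, hamin, hbmax, fun x hx hx0 => ?_,
    le_abs.2 (Or.inr (by linarith [one_lt_sqrt_three]))⟩
  rcases lt_or_ge x (-(5 * π / 6)) with h₁ | h₁
  · exact Or.inr (hunique_b x (Or.inl ⟨hx.1, h₁⟩) hx0)
  rcases le_or_gt x (-(π / 6)) with h₂ | h₂
  · linarith [hf.deriv_le_neg_one_fourth ⟨h₁, h₂⟩]
  rcases lt_or_ge x (π / 6) with h₃ | h₃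
  · exact Or.inl (hunique_a x ⟨h₂, h₃⟩ hx0)
  rcases le_or_gt x (5 * π / 6) with h₄ | h₄
  · linarith [hf.one_fourth_le_deriv ⟨h₃, h₄⟩]
  · exact Or.inr (hunique_b x (Or.inr ⟨h₄, hx.2⟩) hx0)

end IsCosineLike

theorem IsCosineLike.of_add_cos {f : ℝ → ℝ} (h₀ : Differentiable ℝ (f + cos))
    (h₁ : Differentiable ℝ (deriv (f + cos))) (hper : Function.Periodic f (2 * π))
    (hb₀ : ∀ x, |(f + cos) x| ≤ 1 / 4) (hb₁ : ∀ x, |deriv (f + cos) x| ≤ 1 / 4)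
    (hb₂ : ∀ x, |deriv (deriv (f + cos)) x| ≤ 1 / 2) : IsCosineLike f := by
  set e := f + cos
  have hf : f = e - cos := by simp [e]
  have hderiv : deriv f = deriv e + sin := by
    funext x
    simp [hf, deriv_sub (h₀ x) differentiableAt_cos]
  have hderiv2 : deriv (deriv f) = deriv (deriv e) + cos := by
    funext x
    simp [hderiv, deriv_add (h₁ x) differentiableAt_sin]
  refine ⟨hf ▸ h₀.sub differentiable_cos, hderiv ▸ h₁.add differentiable_sin, hper.deriv,
    fun x => ?_, fun x => ?_, fun x => ?_⟩
  · simpa [hf] using hb₀ x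
  · simpa [hderiv] using hb₁ x
  · simpa [hderiv2] using hb₂ x

theorem isCosineLike_reRestrict {s₀ γ : ℝ} {F : ℂ → ℂ} (hs₀ : 0 < s₀)
    (hol : ∀ z : ℂ, |z.im| < s₀ → DifferentiableAt ℂ F z)
    (hper : ∀ z : ℂ, |z.im| < s₀ → F (z + (2 * π : ℝ)) = F z)
    (hγ : γ ≤ (1 / 4) * min 1 (s₀ ^ 2))
    (hbound : ∀ z : ℂ, |z.im| < s₀ → ‖F z + Complex.cos z‖ ≤ γ) :
    IsCosineLike (reRestrict F) := by
  set g : ℂ → ℂ := fun z => F z + Complex.cos z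
  have hg : ∀ z : ℂ, |z.im| < s₀ → DifferentiableAt ℂ g z :=
    fun z hz => (hol z hz).add Complex.differentiableAt_cos
  have hreal : ∀ x : ℝ, (x : ℂ) ∈ {z : ℂ | |z.im| < s₀} := fun x => by simpa using hs₀
  have hsplit : reRestrict F + cos = reRestrict g := by
    funext x
    simp [g, reRestrict, ← Complex.ofReal_cos]
  have hdiff := differentiable_iteratedDeriv_reRestrict (analyticOnNhd_of_forall_abs_im_lt hg) hreal
  have hcauchy := abs_iteratedDeriv_reRestrict_le hs₀ hg hbound
  have hb₀ (x : ℝ) : |reRestrict g x| ≤ γ := by simpa using hcauchy 0 x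
  have hb₁ (x : ℝ) : |deriv (reRestrict g) x| ≤ γ / s₀ := by simpa using hcauchy 1 x
  have hb₂ (x : ℝ) : |deriv (deriv (reRestrict g)) x| ≤ 2 * γ / s₀ ^ 2 := by
    simpa [iteratedDeriv_succ] using hcauchy 2 x
  have hγ₁ : γ ≤ 1 / 4 := hγ.trans (by linarith [min_le_left 1 (s₀ ^ 2)])
  have hγ₂ : γ ≤ s₀ ^ 2 / 4 := hγ.trans (by linarith [min_le_right 1 (s₀ ^ 2)])
  have hγs₀ : γ / s₀ ≤ 1 / 4 := by
    rw [div_le_iff₀ hs₀]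
    -- `s₀ / 4` is the geometric mean of the two bounds on `γ`
    nlinarith
  have hγs₀2 : 2 * γ / s₀ ^ 2 ≤ 1 / 2 := by
    rw [div_le_iff₀ (by positivity)]
    linarith
  rw [← hsplit] at hdiff hb₀ hb₁ hb₂
  exact .of_add_cos (by simpa using hdiff 0) (by simpa using hdiff 1)
    (fun x => by simp only [reRestrict, Complex.ofReal_add, hper _ (hreal x)])
    (fun x => (hb₀ x).trans hγ₁) (fun x => (hb₁ x).trans hγs₀) (fun x => (hb₂ x).trans hγs₀2)

theorem stmt_11_general (s₀ : ℝ) (hs₀ : 0 < s₀) (F : ℂ → ℂ)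
    (hol : ∀ z : ℂ, |z.im| < s₀ → DifferentiableAt ℂ F z)
    (hper : ∀ z : ℂ, |z.im| < s₀ → F (z + (2 * Real.pi : ℝ)) = F z)
    (γ : ℝ) (hγ : γ ≤ (1 / 4) * min 1 (s₀ ^ 2))
    (hbound : ∀ z : ℂ, |z.im| < s₀ → ‖F z + Complex.cos z‖ ≤ γ) :
    -- (i)
    (∀ x : ℝ, 1 / 4 ≤ |deriv (reRestrict F) x| + |deriv (deriv (reRestrict F)) x|) ∧
    -- (ii)
    (∀ z : ℂ, |z.im| < s₀ → ‖F z‖ ≤ γ + Real.cosh s₀) ∧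
    -- (iii) and (iv)
    (∃ a b : ℝ,
      a ∈ Set.Ioo (-(Real.pi / 6)) (Real.pi / 6) ∧
      (b ∈ Set.Ioo (-Real.pi) (-(5 * Real.pi / 6)) ∨
        b ∈ Set.Ioc (5 * Real.pi / 6) Real.pi) ∧
      deriv (reRestrict F) a = 0 ∧ deriv (reRestrict F) b = 0 ∧
      deriv (deriv (reRestrict F)) a ≠ 0 ∧ deriv (deriv (reRestrict F)) b ≠ 0 ∧
      IsLocalMin (reRestrict F) a ∧ IsLocalMax (reRestrict F) b ∧
      (∀ x ∈ Set.Ioc (-Real.pi) Real.pi, deriv (reRestrict F) x = 0 → x = a ∨ x = b) ∧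
      1 / 4 ≤ |reRestrict F a - reRestrict F b|) ∧
    (∀ x ∈ Set.Icc (Real.pi / 6) (5 * Real.pi / 6), 1 / 4 ≤ deriv (reRestrict F) x) ∧
    (∀ x ∈ Set.Icc (-(5 * Real.pi / 6)) (-(Real.pi / 6)),
      deriv (reRestrict F) x ≤ -(1 / 4)) := by
  have hF := isCosineLike_reRestrict hs₀ hol hper hγ hbound
  refine ⟨hF.one_fourth_le_abs_deriv_add_abs_deriv_deriv, fun z hz => ?_,
    hF.exists_critical_points, fun _ => hF.one_fourth_le_deriv, fun _ => hF.deriv_le_neg_one_fourth⟩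
  calc ‖F z‖ = ‖(F z + Complex.cos z) - Complex.cos z‖ := by rw [add_sub_cancel_right]
    _ ≤ γ + cosh z.im := norm_sub_le_of_le (hbound z hz) (Complex.norm_cos_le_cosh_im z)
    _ ≤ γ + cosh s₀ := by
      gcongr
      exact cosh_le_cosh.2 (by rw [abs_of_pos hs₀]; exact hz.le)

theorem stmt_11 (s₀ : ℝ) (hs₀ : 0 < s₀) (F : ℂ → ℂ)
    (hol : ∀ z : ℂ, |z.im| < s₀ → DifferentiableAt ℂ F z)
    (hper : ∀ z : ℂ, |z.im| < s₀ → F (z + (2 * Real.pi : ℝ)) = F z)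
    (hreal : ∀ x : ℝ, (F x).im = 0)
    (γ : ℝ) (hγ0 : 0 < γ) (hγ : γ ≤ (1 / 4) * min 1 (s₀ ^ 2))
    (hbound : ∀ z : ℂ, |z.im| < s₀ → ‖F z + Complex.cos z‖ ≤ γ) :
    -- (i)
    (∀ x : ℝ, 1 / 4 ≤ |deriv (reRestrict F) x| + |deriv (deriv (reRestrict F)) x|) ∧
    -- (ii)
    (∀ z : ℂ, |z.im| < s₀ → ‖F z‖ ≤ γ + Real.cosh s₀) ∧
    -- (iii) and (iv)
    (∃ a b : ℝ,
      a ∈ Set.Ioo (-(Real.pi / 6)) (Real.pi / 6) ∧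
      (b ∈ Set.Ioo (-Real.pi) (-(5 * Real.pi / 6)) ∨
        b ∈ Set.Ioc (5 * Real.pi / 6) Real.pi) ∧
      deriv (reRestrict F) a = 0 ∧ deriv (reRestrict F) b = 0 ∧
      deriv (deriv (reRestrict F)) a ≠ 0 ∧ deriv (deriv (reRestrict F)) b ≠ 0 ∧
      IsLocalMin (reRestrict F) a ∧ IsLocalMax (reRestrict F) b ∧
      (∀ x ∈ Set.Ioc (-Real.pi) Real.pi, deriv (reRestrict F) x = 0 → x = a ∨ x = b) ∧
      1 / 4 ≤ |reRestrict F a - reRestrict F b|) ∧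
    (∀ x ∈ Set.Icc (Real.pi / 6) (5 * Real.pi / 6), 1 / 4 ≤ deriv (reRestrict F) x) ∧
    (∀ x ∈ Set.Icc (-(5 * Real.pi / 6)) (-(Real.pi / 6)),
      deriv (reRestrict F) x ≤ -(1 / 4)) :=
  stmt_11_general s₀ hs₀ F hol hper γ hγ hbound
end

section
/- Let m ≥ 1 be an integer, a < b real numbers, and f : [a,b] → ℝ of class C^{m+1}. Assume ξ := min_{x∈[a,b]} max_{1≤d≤m} |f^{(d)}(x)|/d! > 0, and set M := max_{x∈[a,b], 2≤d≤m+1} |f^{(d)}(x)|/d!. Then for every 0 < μ < 1 the Lebesgue measure of {x ∈ [a,b] : |f(x)| ≤ μ} is at most (m(M+1)(b−a+2μ^{1/(m+1)})/ξ)·μ^{1/(m(m+1))}. -/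
/-!
Write `q = μ ^ (1 / (m (m + 1)))`. If `|f| ≤ μ` on a part of measure more than `d g` of an
interval `J`, that part contains `d + 1` points with mutual distances at least `g`, so the
divided difference of `f` at them is at most `(d + 1) μ / g ^ d` in absolute value; by the mean
value theorem for divided differences it equals `f⁽ᵈ⁾(ζ) / d!` for some `ζ ∈ J`. Choose `d` with
`|f⁽ᵈ⁾| / d! ≥ ξ` at the point of `[a, b]` nearest to the centre of `J`; the bound `M` on
`f⁽ᵈ⁺¹⁾ / (d + 1)!` keeps `|f⁽ᵈ⁾| / d! ≥ ξ - (d + 1) M |J| / 2` on `J`. When `m ≥ 2`, `ξ ≤ M`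
and `m (M + 1) q < ξ`, the choice `|J| = 2 q ^ m`, `g = 2 (M + 1) q ^ (m + 1) / ξ` makes the two
bounds incompatible, so the sublevel set meets each such `J` in measure at most `m g`, and
`(b - a) / |J| + 1` of them cover `[a, b]`. If `m = 1` or `M < ξ`, then `|f'| ≥ ξ` everywhere
and the sublevel set has measure at most `2 μ / ξ`; if `ξ ≤ m (M + 1) q`, the bound exceeds
`b - a`.
-/

open Set MeasureTheory Polynomial Finset
open scoped Nat

theorem Polynomial.iteratedDeriv_eval {𝕜 : Type*} [NontriviallyNormedField 𝕜] (p : 𝕜[X]) (k : ℕ) :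
    iteratedDeriv k (fun x => p.eval x) = fun x => (derivative^[k] p).eval x := by
  induction k with
  | zero => simp
  | succ k ih =>
    ext x
    rw [iteratedDeriv_succ, ih, Function.iterate_succ_apply']
    exact Polynomial.deriv _

theorem exists_iteratedDerivWithin_eq_zero {s : Set ℝ} (hs : UniqueDiffOn ℝ s)
    (hs' : s.OrdConnected) {n : ℕ} {f : ℝ → ℝ} (hf : ContDiffOn ℝ n f s)
    {y : Fin (n + 1) → ℝ} (hy : StrictMono y) (hys : ∀ i, y i ∈ s) (hfy : ∀ i, f (y i) = 0) :
    ∃ ζ ∈ Icc (y 0) (y (Fin.last n)), iteratedDerivWithin n f s ζ = 0 := by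
  induction n generalizing f with
  | zero => exact ⟨y 0, left_mem_Icc.2 le_rfl, by simpa using hfy 0⟩
  | succ n ih =>
    have hrolle : ∀ i : Fin (n + 1),
        ∃ z ∈ Ioo (y i.castSucc) (y i.succ), derivWithin f s z = 0 := by
      intro i
      have hsub : Icc (y i.castSucc) (y i.succ) ⊆ s := hs'.out (hys _) (hys _)
      obtain ⟨z, hz, hz0⟩ := exists_deriv_eq_zero (hy Fin.castSucc_lt_succ)
        (hf.continuousOn.mono hsub) ((hfy _).trans (hfy _).symm)
      refine ⟨z, hz, ?_⟩
      rw [derivWithin_of_mem_nhds (Filter.mem_of_superset (Ioo_mem_nhds hz.1 hz.2)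
        (Ioo_subset_Icc_self.trans hsub)), hz0]
    choose z hz hz0 using hrolle
    have hzmono : StrictMono z := fun i j hij =>
      calc z i < y i.succ := (hz i).2
        _ ≤ y j.castSucc := hy.monotone (Fin.succ_le_castSucc_iff.2 hij)
        _ < z j := (hz j).1
    have hzs : ∀ i, z i ∈ s := fun i =>
      hs'.out (hys _) (hys _) (Ioo_subset_Icc_self (hz i))
    obtain ⟨ζ, hζ, hζ0⟩ := ih (hf.derivWithin hs (by norm_cast)) hzmono hzs hz0
    refine ⟨ζ, ⟨?_, ?_⟩, by rwa [iteratedDerivWithin_succ']⟩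
    · exact (hy.monotone (Fin.zero_le _)).trans ((hz 0).1.le.trans hζ.1)
    · exact hζ.2.trans ((hz _).2.le.trans (hy.monotone (Fin.le_last _)))

theorem eval_iterate_derivative_interpolate {n : ℕ} (y w : Fin (n + 1) → ℝ)
    (hy : Function.Injective y) (x : ℝ) :
    (derivative^[n] (Lagrange.interpolate univ y w)).eval x =
      n ! * ∑ j, w j / ∏ i ∈ univ.erase j, (y j - y i) := by
  have hinj : Set.InjOn y (univ : Finset (Fin (n + 1))) := hy.injOn
  rw [Lagrange.eval_iterate_derivative_eq_sum hinj (Lagrange.degree_interpolate_lt _ hinj)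
    (by simp) x]
  simp only [card_univ, Fintype.card_fin, Nat.sub_self, powersetCard_zero, sum_singleton,
    Finset.prod_empty, mul_one, Lagrange.eval_interpolate_at_node _ hinj (mem_univ _)]

/-- Mean value theorem for divided differences: the sum is the divided difference
`f[y 0, …, y n]`. -/
theorem exists_iteratedDerivWithin_eq_factorial_mul_sum {s : Set ℝ} (hs : UniqueDiffOn ℝ s)
    (hs' : s.OrdConnected) {n : ℕ} {f : ℝ → ℝ} (hf : ContDiffOn ℝ n f s) {y : Fin (n + 1) → ℝ}
    (hy : StrictMono y) (hys : ∀ i, y i ∈ s) :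
    ∃ ζ ∈ Icc (y 0) (y (Fin.last n)),
      iteratedDerivWithin n f s ζ = n ! * ∑ j, f (y j) / ∏ i ∈ univ.erase j, (y j - y i) := by
  set P := Lagrange.interpolate univ y (fun j => f (y j))
  have hP : ContDiff ℝ n (fun x => P.eval x) := by simpa using P.contDiff_aeval (𝕜 := ℝ) n
  obtain ⟨ζ, hζ, hζ0⟩ := exists_iteratedDerivWithin_eq_zero (f := f - fun x => P.eval x) hs hs'
    (hf.sub hP.contDiffOn) hy hys
    fun i => sub_eq_zero.2
      (Lagrange.eval_interpolate_at_node (fun j => f (y j)) hy.injective.injOn (mem_univ i)).symm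
  have hζs : ζ ∈ s := hs'.out (hys _) (hys _) hζ
  refine ⟨ζ, hζ, ?_⟩
  rw [iteratedDerivWithin_sub hζs hs (hf ζ hζs) hP.contDiffWithinAt, sub_eq_zero,
    iteratedDerivWithin_eq_iteratedDeriv hs hP.contDiffAt hζs, iteratedDeriv_eval] at hζ0
  exact hζ0.trans (eval_iterate_derivative_interpolate _ _ hy.injective ζ)

theorem abs_sum_div_prod_sub_mul_pow_le {n : ℕ} {y w : Fin (n + 1) → ℝ} {g μ : ℝ} (hg : 0 ≤ g)
    (hy : ∀ i j, i ≠ j → g ≤ |y j - y i|) (hw : ∀ j, |w j| ≤ μ) :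
    |∑ j, w j / ∏ i ∈ univ.erase j, (y j - y i)| * g ^ n ≤ (n + 1) * μ := by
  have hprod : ∀ j, g ^ n ≤ |∏ i ∈ univ.erase j, (y j - y i)| := fun j => by
    rw [abs_prod]
    calc g ^ n = ∏ _i ∈ univ.erase j, g := by simp [card_erase_of_mem]
      _ ≤ _ := prod_le_prod (fun _ _ => hg) fun i hi => hy _ _ (ne_of_mem_erase hi)
  calc |∑ j, w j / ∏ i ∈ univ.erase j, (y j - y i)| * g ^ n
      ≤ (∑ j, |w j / ∏ i ∈ univ.erase j, (y j - y i)|) * g ^ n :=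
        mul_le_mul_of_nonneg_right (abs_sum_le_sum_abs _ _) (by positivity)
    _ = ∑ j, |w j| * (g ^ n / |∏ i ∈ univ.erase j, (y j - y i)|) := by
        rw [sum_mul]
        congr 1 with j
        rw [abs_div]
        ring
    _ ≤ ∑ _j : Fin (n + 1), μ := sum_le_sum fun j _ =>
        (mul_le_of_le_one_right (abs_nonneg _)
          (div_le_one_of_le₀ (hprod j) (abs_nonneg _))).trans (hw j)
    _ = (n + 1) * μ := by simp

theorem exists_separated_of_ofReal_lt_volume {g : ℝ} (hg : 0 ≤ g) :
    ∀ (n : ℕ) {S : Set ℝ}, IsClosed S → BddBelow S → ENNReal.ofReal (n * g) < volume S →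
      ∃ y : Fin (n + 1) → ℝ, (∀ i, y i ∈ S) ∧ ∀ i j, i < j → y i + g ≤ y j
  | 0, S, _, _, h => by
    obtain ⟨x, hx⟩ := nonempty_of_measure_ne_zero (pos_of_gt h).ne'
    exact ⟨fun _ => x, fun _ => hx, fun i j hij =>
      (Fin.not_lt_zero i (Fin.fin_one_eq_zero j ▸ hij)).elim⟩
  | n + 1, S, hS, hS', h => by
    have hne : S.Nonempty := nonempty_of_measure_ne_zero (pos_of_gt h).ne'
    set s₀ := sInf S
    have hs₀ : s₀ ∈ S := hS.csInf_mem hne hS'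
    have hsub : S ⊆ Ico s₀ (s₀ + g) ∪ (S ∩ Ici (s₀ + g)) := fun x hx =>
      (lt_or_ge x (s₀ + g)).imp (fun h => ⟨csInf_le hS' hx, h⟩) fun h => ⟨hx, h⟩
    have h' : ENNReal.ofReal (n * g) < volume (S ∩ Ici (s₀ + g)) := by
      have := h.trans_le ((measure_mono hsub).trans (measure_union_le _ _))
      rw [Real.volume_Ico, add_sub_cancel_left, Nat.cast_succ, add_one_mul,
        ENNReal.ofReal_add (by positivity) hg, add_comm] at this
      exact (ENNReal.add_lt_add_iff_left ENNReal.ofReal_ne_top).1 this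
    obtain ⟨y, hyS, hy⟩ := exists_separated_of_ofReal_lt_volume hg n (hS.inter isClosed_Ici)
      (hS'.mono inter_subset_left) h'
    refine ⟨Fin.cons s₀ y, Fin.cases hs₀ fun i => (hyS i).1, fun i j hij => ?_⟩
    induction j using Fin.cases with
    | zero => exact absurd hij (Fin.not_lt_zero _)
    | succ j =>
      induction i using Fin.cases with
      | zero => simpa using (hyS j).2
      | succ i => simpa using hy i j (Fin.succ_lt_succ_iff.1 hij)

theorem volume_sublevel_inter_Icc_le_of_le_abs_iteratedDerivWithin {a b : ℝ} (hab : a < b)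
    {n : ℕ} {f : ℝ → ℝ} (hf : ContDiffOn ℝ n f (Icc a b)) {u v c μ g : ℝ} (hg : 0 < g)
    (hc : ∀ x ∈ Icc a b ∩ Icc u v, c ≤ |iteratedDerivWithin n f (Icc a b) x| / n !)
    (hμ : (n + 1) * μ < c * g ^ n) :
    volume ({x ∈ Icc a b | |f x| ≤ μ} ∩ Icc u v) ≤ ENNReal.ofReal (n * g) := by
  set S := {x ∈ Icc a b | |f x| ≤ μ} ∩ Icc u v
  have hS : IsClosed S := (hf.continuousOn.abs.preimage_isClosed_of_isClosed isClosed_Icc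
    isClosed_Iic).inter isClosed_Icc
  by_contra! hlt
  obtain ⟨y, hyS, hy⟩ :=
    exists_separated_of_ofReal_lt_volume hg.le n hS ⟨u, fun x hx => hx.2.1⟩ hlt
  have hymono : StrictMono y := fun i j hij => by linarith [hy i j hij]
  obtain ⟨ζ, hζ, hζeq⟩ := exists_iteratedDerivWithin_eq_factorial_mul_sum (uniqueDiffOn_Icc hab)
    ordConnected_Icc hf hymono fun i => (hyS i).1.1
  have hζmem : ζ ∈ Icc a b ∩ Icc u v :=
    (ordConnected_Icc.inter ordConnected_Icc).out ⟨(hyS 0).1.1, (hyS 0).2⟩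
      ⟨(hyS _).1.1, (hyS _).2⟩ hζ
  have hsep : ∀ i j, i ≠ j → g ≤ |y j - y i| := fun i j hij => by
    rcases hij.lt_or_gt with h | h
    · exact (by linarith [hy i j h] : g ≤ y j - y i).trans (le_abs_self _)
    · exact (by linarith [hy j i h] : g ≤ y i - y j).trans
        (abs_sub_comm (y j) (y i) ▸ le_abs_self _)
  have hsum := abs_sum_div_prod_sub_mul_pow_le hg.le hsep fun j => (hyS j).1.2
  have hcζ := hc ζ hζmem
  rw [hζeq, abs_mul, Nat.abs_cast, mul_div_cancel_left₀ _ (by positivity)] at hcζ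
  linarith [mul_le_mul_of_nonneg_right hcζ (pow_nonneg hg.le n)]

theorem volume_sublevel_le_of_le_abs_iteratedDerivWithin_one {a b : ℝ} (hab : a < b)
    {f : ℝ → ℝ} (hf : ContDiffOn ℝ 1 f (Icc a b)) {ξ μ : ℝ} (hξ : 0 < ξ) (hμ : 0 ≤ μ)
    (h : ∀ x ∈ Icc a b, ξ ≤ |iteratedDerivWithin 1 f (Icc a b) x|) :
    volume {x ∈ Icc a b | |f x| ≤ μ} ≤ ENNReal.ofReal (2 * μ / ξ) := by
  refine ENNReal.le_of_forall_pos_le_add fun ε hε _ => ?_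
  have hε' : (0 : ℝ) < ε := hε
  have := volume_sublevel_inter_Icc_le_of_le_abs_iteratedDerivWithin (n := 1) (u := a) (v := b)
    (μ := μ) hab (by exact_mod_cast hf) (by positivity : 0 < 2 * μ / ξ + ε)
    (fun x hx => by simpa using h x hx.1)
    (by rw [pow_one, mul_add, mul_div_cancel₀ _ hξ.ne']; push_cast; nlinarith)
  rw [inter_eq_left.2 fun x hx => hx.1, Nat.cast_one, one_mul] at this
  rwa [ENNReal.ofReal_add (by positivity) ε.coe_nonneg, ENNReal.ofReal_coe_nnreal]
    at this

theorem abs_iteratedDerivWithin_sub_le {a b : ℝ} (hab : a < b) {n : ℕ} {f : ℝ → ℝ}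
    (hf : ContDiffOn ℝ (n + 1 : ℕ) f (Icc a b)) {C : ℝ}
    (hC : ∀ x ∈ Icc a b, |iteratedDerivWithin (n + 1) f (Icc a b) x| ≤ C) {x y : ℝ}
    (hx : x ∈ Icc a b) (hy : y ∈ Icc a b) :
    |iteratedDerivWithin n f (Icc a b) x - iteratedDerivWithin n f (Icc a b) y| ≤ C * |x - y| := by
  have := (convex_Icc a b).norm_image_sub_le_of_norm_derivWithin_le
    (hf.differentiableOn_iteratedDerivWithin (by exact_mod_cast n.lt_succ_self)
      (uniqueDiffOn_Icc hab))
    (fun z hz => by rw [← iteratedDerivWithin_succ]; exact hC z hz) hy hx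
  simpa only [Real.norm_eq_abs] using this

theorem abs_sub_projIcc_le {a b u L : ℝ} (hab : a ≤ b) {x : ℝ}
    (hx : x ∈ Icc a b ∩ Icc u (u + L)) :
    |x - projIcc a b hab (u + L / 2)| ≤ L / 2 :=
  calc |x - projIcc a b hab (u + L / 2)|
      = |(projIcc a b hab x : ℝ) - projIcc a b hab (u + L / 2)| := by rw [projIcc_of_mem _ hx.1]
    _ ≤ |x - (u + L / 2)| := abs_projIcc_sub_projIcc hab
    _ ≤ L / 2 := abs_le.2 ⟨by linarith [hx.2.1], by linarith [hx.2.2]⟩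

theorem volume_le_of_forall_volume_inter_Icc_le {S : Set ℝ} {a b L V : ℝ} (hab : a ≤ b)
    (hS : S ⊆ Icc a b) (hL : 0 < L) (hV : 0 ≤ V)
    (h : ∀ u, volume (S ∩ Icc u (u + L)) ≤ ENNReal.ofReal V) :
    volume S ≤ ENNReal.ofReal (((b - a) / L + 1) * V) := by
  set N := ⌊(b - a) / L⌋₊ + 1
  have hcover : S ⊆ ⋃ i ∈ range N, S ∩ Icc (a + L * i) (a + L * i + L) := by
    intro x hx
    have hxa : 0 ≤ (x - a) / L := div_nonneg (by linarith [(hS hx).1]) hL.le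
    have hi : ⌊(x - a) / L⌋₊ < N := Nat.lt_succ_of_le (Nat.floor_le_floor
      (div_le_div_of_nonneg_right (by linarith [(hS hx).2]) hL.le))
    refine mem_biUnion (mem_range.2 hi) ⟨hx, ?_, ?_⟩
    · linarith [(le_div_iff₀ hL).1 (Nat.floor_le hxa)]
    · linarith [(div_lt_iff₀ hL).1 (Nat.lt_floor_add_one ((x - a) / L))]
  calc volume S ≤ ∑ i ∈ range N, volume (S ∩ Icc (a + L * i) (a + L * i + L)) :=
        (measure_mono hcover).trans (measure_biUnion_finset_le _ _)
    _ ≤ ∑ _i ∈ range N, ENNReal.ofReal V := sum_le_sum fun i _ => h _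
    _ = ENNReal.ofReal (N * V) := by
        rw [sum_const, card_range, nsmul_eq_mul, ENNReal.ofReal_mul (by positivity),
          ENNReal.ofReal_natCast]
    _ ≤ ENNReal.ofReal (((b - a) / L + 1) * V) := by
        gcongr
        simp only [N, Nat.cast_add, Nat.cast_one, add_le_add_iff_right]
        exact Nat.floor_le (div_nonneg (sub_nonneg.2 hab) hL.le)

theorem le_abs_iteratedDerivWithin_one {m : ℕ} {a b : ℝ} {f : ℝ → ℝ} {ξ M : ℝ}
    (hξ : ∀ x ∈ Icc a b, ∃ d : ℕ, 1 ≤ d ∧ d ≤ m ∧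
      ξ ≤ |iteratedDerivWithin d f (Icc a b) x| / d !)
    (hM : ∀ x ∈ Icc a b, ∀ d : ℕ, 2 ≤ d → d ≤ m + 1 →
      |iteratedDerivWithin d f (Icc a b) x| / d ! ≤ M)
    (h : m = 1 ∨ M < ξ) {x : ℝ} (hx : x ∈ Icc a b) :
    ξ ≤ |iteratedDerivWithin 1 f (Icc a b) x| := by
  obtain ⟨d, hd, hdm, hξd⟩ := hξ x hx
  obtain rfl | hd := hd.eq_or_lt
  · simpa using hξd
  · refine absurd (hξd.trans (hM x hx d hd (by omega))) ?_
    rcases h with rfl | h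
    · omega
    · exact h.not_ge

theorem volume_sublevel_inter_Icc_le {m : ℕ} {a b : ℝ} (hab : a < b) {f : ℝ → ℝ}
    (hf : ContDiffOn ℝ (m + 1 : ℕ) f (Icc a b)) {ξ M μ g L : ℝ} (hg : 0 < g)
    (hξ : ∀ x ∈ Icc a b, ∃ d : ℕ, 1 ≤ d ∧ d ≤ m ∧
      ξ ≤ |iteratedDerivWithin d f (Icc a b) x| / d !)
    (hM : ∀ x ∈ Icc a b, ∀ d : ℕ, 2 ≤ d → d ≤ m + 1 →
      |iteratedDerivWithin d f (Icc a b) x| / d ! ≤ M)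
    (hμ : ∀ d : ℕ, 1 ≤ d → d ≤ m → (d + 1) * μ < (ξ - (d + 1) * M * (L / 2)) * g ^ d) (u : ℝ) :
    volume ({x ∈ Icc a b | |f x| ≤ μ} ∩ Icc u (u + L)) ≤ ENNReal.ofReal (m * g) := by
  set x₀ : ℝ := (projIcc a b hab.le (u + L / 2) : ℝ)
  have hx₀ : x₀ ∈ Icc a b := (projIcc a b hab.le (u + L / 2)).2
  obtain ⟨d, hd, hdm, hξd⟩ := hξ x₀ hx₀
  have hderiv : ∀ z ∈ Icc a b, |iteratedDerivWithin (d + 1) f (Icc a b) z| ≤ (d + 1)! * M :=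
    fun z hz => (div_le_iff₀' (by positivity)).1 (hM z hz (d + 1) (by omega) (by omega))
  have hM0 : 0 ≤ M :=
    (div_nonneg (abs_nonneg _) (by positivity)).trans (hM x₀ hx₀ (d + 1) (by omega) (by omega))
  have hc : ∀ x ∈ Icc a b ∩ Icc u (u + L),
      ξ - (d + 1) * M * (L / 2) ≤ |iteratedDerivWithin d f (Icc a b) x| / d ! := by
    intro x hx
    set F := iteratedDerivWithin d f (Icc a b)
    have hlip : |F x₀ - F x| ≤ (d + 1)! * M * |x₀ - x| := abs_iteratedDerivWithin_sub_le hab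
      (hf.of_le (by exact_mod_cast (by omega : d + 1 ≤ m + 1))) hderiv hx₀ hx.1
    have hdist : |x₀ - x| ≤ L / 2 := abs_sub_comm x x₀ ▸ abs_sub_projIcc_le hab.le hx
    have htri := abs_sub_abs_le_abs_sub (F x₀) (F x)
    suffices ξ ≤ |F x| / d ! + (d + 1) * M * |x₀ - x| by
      linarith [mul_le_mul_of_nonneg_left hdist (mul_nonneg (by positivity : (0 : ℝ) ≤ d + 1) hM0)]
    calc ξ ≤ |F x₀| / d ! := hξd
      _ ≤ (|F x| + (d + 1)! * M * |x₀ - x|) / d ! := by gcongr; linarith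
      _ = |F x| / d ! + (d + 1) * M * |x₀ - x| := by
        rw [Nat.factorial_succ]; push_cast; field_simp
  calc volume ({x ∈ Icc a b | |f x| ≤ μ} ∩ Icc u (u + L)) ≤ ENNReal.ofReal (d * g) :=
        volume_sublevel_inter_Icc_le_of_le_abs_iteratedDerivWithin hab
          (hf.of_le (by exact_mod_cast (by omega : d ≤ m + 1))) hg hc (hμ d hd hdm)
    _ ≤ ENNReal.ofReal (m * g) := by gcongr

theorem add_one_le_three_quarters_mul_two_pow {n : ℕ} (hn : 2 ≤ n) :
    (n + 1 : ℝ) ≤ 3 / 4 * 2 ^ n := by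
  have h : 4 * (n + 1) ≤ 3 * 2 ^ n := by
    induction n, hn using Nat.le_induction with
    | base => norm_num
    | succ n _ ih => rw [pow_succ]; omega
  have h' : ((4 * (n + 1) : ℕ) : ℝ) ≤ ((3 * 2 ^ n : ℕ) : ℝ) := by exact_mod_cast h
  push_cast at h'
  linarith

theorem add_one_mul_pow_mul_pow_le {m d : ℕ} (hm : 2 ≤ m) (hd : 1 ≤ d) (hdm : d ≤ m) {ρ q : ℝ}
    (hρ : ρ ≤ 1) (hq : 0 ≤ q) (hqρ : 2 * q ≤ ρ) :
    (d + 1) * ρ ^ d * q ^ ((m + 1) * (m - d)) ≤ 3 / 4 * ρ * 2 ^ d := by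
  have hρ0 : 0 ≤ ρ := by linarith
  have hq1 : q ≤ 1 := by linarith
  rcases hd.eq_or_lt with rfl | hd
  · have : q ^ ((m + 1) * (m - 1)) ≤ q :=
      pow_le_of_le_one hq hq1 (Nat.mul_ne_zero (by omega) (by omega))
    nlinarith
  · calc (d + 1) * ρ ^ d * q ^ ((m + 1) * (m - d)) ≤ (3 / 4 * 2 ^ d) * ρ * 1 := by
          gcongr
          · exact add_one_le_three_quarters_mul_two_pow hd
          · exact pow_le_of_le_one hρ0 hρ (by omega)
          · exact pow_le_one₀ hq hq1
      _ = 3 / 4 * ρ * 2 ^ d := by ring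

theorem add_one_mul_pow_le {m : ℕ} (hm : 2 ≤ m) {ρ q : ℝ} (hρ : ρ ≤ 1) (hq : 0 ≤ q)
    (hqρ : 2 * q ≤ ρ) : (m + 1) * q ^ m ≤ 3 / 4 * ρ :=
  calc (m + 1) * q ^ m ≤ (3 / 4 * 2 ^ m) * (ρ / 2) ^ m := by
        gcongr
        · exact add_one_le_three_quarters_mul_two_pow hm
        · linarith
    _ = 3 / 4 * ρ ^ m := by rw [div_pow]; field_simp
    _ ≤ 3 / 4 * ρ := by gcongr; exact pow_le_of_le_one (by linarith) hρ (by omega)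

theorem add_one_mul_pow_lt {m d : ℕ} (hm : 2 ≤ m) (hd : 1 ≤ d) (hdm : d ≤ m) {ξ M q : ℝ}
    (hM : 0 ≤ M) (hξM : ξ ≤ M + 1) (hq : 0 < q) (hqξ : 2 * (M + 1) * q < ξ) :
    (d + 1) * q ^ (m * (m + 1)) <
      (ξ - (d + 1) * M * q ^ m) * (2 * q ^ (m + 1) * (M + 1) / ξ) ^ d := by
  have hM1 : 0 < M + 1 := by linarith
  obtain ⟨ρ, hρ⟩ : ∃ ρ, ρ = ξ / (M + 1) := ⟨_, rfl⟩
  have hξρ : ξ = ρ * (M + 1) := by rw [hρ, div_mul_cancel₀ ξ hM1.ne']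
  have hρ0 : 0 < ρ := hρ ▸ div_pos (by nlinarith) hM1
  have hρ1 : ρ ≤ 1 := hρ ▸ (div_le_one hM1).2 hξM
  have hqρ : 2 * q ≤ ρ := hρ ▸ (le_div_iff₀ hM1).2 (by linarith)
  have hA := add_one_mul_pow_mul_pow_le hm hd hdm hρ1 hq.le hqρ
  have hB : (d + 1) * M * q ^ m ≤ 3 / 4 * ρ * M :=
    calc (d + 1) * M * q ^ m = ((d + 1) * q ^ m) * M := by ring
      _ ≤ ((m + 1) * q ^ m) * M := by gcongr
      _ ≤ 3 / 4 * ρ * M :=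
        mul_le_mul_of_nonneg_right (add_one_mul_pow_le hm hρ1 hq.le hqρ) hM
  have key : (d + 1) * ρ ^ d * q ^ ((m + 1) * (m - d)) < (ξ - (d + 1) * M * q ^ m) * 2 ^ d :=
    hA.trans_lt (mul_lt_mul_of_pos_right (by nlinarith) (by positivity))
  have hexp : q ^ (m * (m + 1)) = q ^ ((m + 1) * (m - d)) * q ^ ((m + 1) * d) := by
    rw [← pow_add, ← mul_add, Nat.sub_add_cancel hdm, mul_comm]
  calc (d + 1) * q ^ (m * (m + 1))
      = (d + 1) * ρ ^ d * q ^ ((m + 1) * (m - d)) * (q ^ ((m + 1) * d) / ρ ^ d) := by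
        rw [hexp]; field_simp
    _ < (ξ - (d + 1) * M * q ^ m) * 2 ^ d * (q ^ ((m + 1) * d) / ρ ^ d) :=
        mul_lt_mul_of_pos_right key (by positivity)
    _ = (ξ - (d + 1) * M * q ^ m) * (2 * q ^ (m + 1) * (M + 1) / ξ) ^ d := by
        rw [hξρ, mul_div_mul_right _ _ hM1.ne', div_pow, mul_pow, ← pow_mul]
        field_simp

theorem rpow_one_div_mul_add_one_pow_mul {μ : ℝ} (hμ : 0 ≤ μ) {m : ℕ} (hm : m ≠ 0) :
    (μ ^ ((1 : ℝ) / (m * (m + 1)))) ^ (m * (m + 1)) = μ := by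
  have := Real.rpow_inv_natCast_pow hμ (Nat.mul_ne_zero hm m.succ_ne_zero)
  push_cast at this
  rwa [← one_div] at this

theorem rpow_one_div_mul_add_one_pow {μ : ℝ} (hμ : 0 ≤ μ) {m : ℕ} (hm : m ≠ 0) :
    (μ ^ ((1 : ℝ) / (m * (m + 1)))) ^ m = μ ^ ((1 : ℝ) / (m + 1)) := by
  rw [← Real.rpow_natCast, ← Real.rpow_mul hμ]
  field_simp

theorem stmt_12 (m : ℕ) (hm : 1 ≤ m) (a b : ℝ) (hab : a < b) (f : ℝ → ℝ)
    (hf : ContDiffOn ℝ (m + 1 : ℕ) f (Set.Icc a b))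
    (ξ M : ℝ) (hξ : 0 < ξ)
    (hξ' : ∀ x ∈ Set.Icc a b, ∃ d : ℕ, 1 ≤ d ∧ d ≤ m ∧
      ξ ≤ |iteratedDerivWithin d f (Set.Icc a b) x| / (Nat.factorial d : ℝ))
    (hM : ∀ x ∈ Set.Icc a b, ∀ d : ℕ, 2 ≤ d → d ≤ m + 1 →
      |iteratedDerivWithin d f (Set.Icc a b) x| / (Nat.factorial d : ℝ) ≤ M)
    (μ : ℝ) (hμ0 : 0 < μ) (hμ1 : μ < 1) :
    MeasureTheory.volume {x ∈ Set.Icc a b | |f x| ≤ μ} ≤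
      ENNReal.ofReal
        ((m * (M + 1) * (b - a + 2 * μ ^ ((1 : ℝ) / (m + 1))) / ξ) *
          μ ^ ((1 : ℝ) / (m * (m + 1)))) := by
  set q : ℝ := μ ^ ((1 : ℝ) / (m * (m + 1)))
  have hq0 : 0 < q := Real.rpow_pos_of_pos hμ0 _
  have hq1 : q < 1 := Real.rpow_lt_one hμ0.le hμ1 (by positivity)
  have hm0 : m ≠ 0 := by omega
  have hμq : μ = q ^ (m * (m + 1)) := (rpow_one_div_mul_add_one_pow_mul hμ0.le hm0).symm
  rw [← rpow_one_div_mul_add_one_pow hμ0.le hm0]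
  have hM0 : 0 ≤ M := (div_nonneg (abs_nonneg _) (by positivity)).trans
    (hM a (left_mem_Icc.2 hab.le) 2 le_rfl (by omega))
  have hmM : 1 ≤ (m : ℝ) * (M + 1) :=
    one_le_mul_of_one_le_of_one_le (by exact_mod_cast hm) (by linarith)
  by_cases h1 : m = 1 ∨ M < ξ
  · refine (volume_sublevel_le_of_le_abs_iteratedDerivWithin_one hab (hf.of_le (by simp)) hξ
      hμ0.le fun x hx => le_abs_iteratedDerivWithin_one hξ' hM h1 hx).trans
      (ENNReal.ofReal_le_ofReal ?_)
    have hμ : μ ≤ q ^ m * q := hμq ▸ pow_succ q m ▸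
      pow_le_pow_of_le_one hq0.le hq1.le (by nlinarith)
    rw [div_mul_eq_mul_div]
    refine div_le_div_of_nonneg_right ?_ hξ.le
    nlinarith [mul_le_mul_of_nonneg_right hmM (by positivity : 0 ≤ (b - a + 2 * q ^ m) * q)]
  rw [not_or, not_lt] at h1
  have hm2 : 2 ≤ m := by omega
  by_cases htriv : ξ ≤ m * (M + 1) * q
  · refine (measure_mono fun x hx => hx.1).trans (Real.volume_Icc.trans_le
      (ENNReal.ofReal_le_ofReal ?_))
    rw [div_mul_eq_mul_div, le_div_iff₀ hξ]
    nlinarith [mul_le_mul_of_nonneg_left htriv (sub_nonneg.2 hab.le), pow_pos hq0 m]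
  refine (volume_le_of_forall_volume_inter_Icc_le (L := 2 * q ^ m) hab.le (fun x hx => hx.1)
    (by positivity) (by positivity) (volume_sublevel_inter_Icc_le hab hf
    (g := 2 * q ^ (m + 1) * (M + 1) / ξ) (by positivity) hξ' hM fun d hd hdm => ?_)).trans_eq ?_
  · rw [hμq, mul_div_cancel_left₀ _ two_ne_zero]
    have hm2' : (2 : ℝ) ≤ m := by exact_mod_cast hm2
    exact add_one_mul_pow_lt hm2 hd hdm hM0 (by linarith) hq0 (by nlinarith)
  · congr 1
    field_simp
    ring
end

section
/- Define ĥ : ℝ^{n−1} → ℝ by ĥ(P̂) := κ⁻¹·‖π_k^⊥(Âᵀ P̂)‖². Then the determinant of the Hessian of ĥ is constant and equals 2^{n−1}·‖k‖^{−2n}, i.e. det(∂²_{P̂P̂} ĥ) = 2^{n−1} κ^{−n}. -/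
open scoped Matrix

/-- The Hessian matrix of second partial derivatives of `g : ℝ^m → ℝ` at `y`. -/
noncomputable def hessianM {n : ℕ} (g : (Fin n → ℝ) → ℝ) (y : Fin n → ℝ) :
    Matrix (Fin n) (Fin n) ℝ :=
  Matrix.of fun i j =>
    fderiv ℝ (fun z => fderiv ℝ g z (Pi.single j 1)) y (Pi.single i 1)

/-!
Put `κ = k ⬝ᵥ k`. Since `π_k^⊥` is a symmetric idempotent, `ĥ(P) = κ⁻¹ Pᵀ S P` with
`S = Â π_k^⊥ Âᵀ = Â Âᵀ - κ⁻¹ (Â k)(Â k)ᵀ`, so the Hessian is the constant matrix `2 κ⁻¹ S`.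
Now `S` is the Schur complement of the corner `κ` in the Gram matrix `A Aᵀ`, whose determinant
is `(det A)² = 1`; hence `det S = κ⁻¹` and `det (2 κ⁻¹ S) = 2^(n-1) κ^(-n)`.
-/

open Matrix

section QuadraticForm

variable {ι : Type*} [Fintype ι]

lemma hasFDerivAt_mulVec_apply (M : Matrix ι ι ℝ) (i : ι) (z : ι → ℝ) :
    HasFDerivAt (fun P => (M *ᵥ P) i)
      (ContinuousLinearMap.proj i ∘L (mulVecLin M).toContinuousLinearMap) z :=
  (hasFDerivAt_apply (𝕜 := ℝ) i (M *ᵥ z)).comp z (mulVecLin M).toContinuousLinearMap.hasFDerivAt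

lemma fderiv_dotProduct_mulVec_self_apply (M : Matrix ι ι ℝ) (z v : ι → ℝ) :
    fderiv ℝ (fun P => P ⬝ᵥ (M *ᵥ P)) z v = ((M + Mᵀ) *ᵥ z) ⬝ᵥ v := by
  have h := HasFDerivAt.fun_sum (u := Finset.univ) fun i _ =>
    (hasFDerivAt_apply i z).fun_mul (hasFDerivAt_mulVec_apply M i z)
  rw [show (fun P => P ⬝ᵥ (M *ᵥ P)) = fun P => ∑ i, P i * (M *ᵥ P) i from rfl, h.fderiv]
  simp only [FunLike.coe_sum, Finset.sum_apply, _root_.add_apply,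
    _root_.smul_apply, ContinuousLinearMap.comp_apply,
    ContinuousLinearMap.proj_apply, LinearMap.coe_toContinuousLinearMap', mulVecLin_apply,
    smul_eq_mul, Finset.sum_add_distrib]
  change z ⬝ᵥ (M *ᵥ v) + (M *ᵥ z) ⬝ᵥ v = _
  rw [dotProduct_mulVec, ← mulVec_transpose, add_mulVec, add_dotProduct, add_comm]

lemma hessianM_dotProduct_mulVec_self {n : ℕ} (M : Matrix (Fin n) (Fin n) ℝ) (y : Fin n → ℝ) :
    hessianM (fun P => P ⬝ᵥ (M *ᵥ P)) y = M + Mᵀ := by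
  ext i j
  have hpartial : (fun z => fderiv ℝ (fun P => P ⬝ᵥ (M *ᵥ P)) z (Pi.single j 1))
      = fun z => ((M + Mᵀ) *ᵥ z) j := by
    funext z
    rw [fderiv_dotProduct_mulVec_self_apply, dotProduct_single, mul_one]
  rw [hessianM, of_apply, hpartial, (hasFDerivAt_mulVec_apply (M + Mᵀ) j y).fderiv]
  simp [add_comm]

end QuadraticForm

section Projection

variable {ι ν α : Type*} [Fintype ν] [Field α]

-- The Gram matrix of the rows of `B` projected onto `kᗮ`.
def projGram (B : Matrix ι ν α) (k : ν → α) : Matrix ι ι α :=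
  B * Bᵀ - (k ⬝ᵥ k)⁻¹ • vecMulVec (B *ᵥ k) (B *ᵥ k)

lemma projGram_transpose (B : Matrix ι ν α) (k : ν → α) : (projGram B k)ᵀ = projGram B k := by
  simp [projGram, transpose_sub, transpose_mul, transpose_smul, transpose_vecMulVec]

lemma sum_sq_eq_dotProduct_self {n : ℕ} (u : Fin n → ℝ) : ∑ i, u i ^ 2 = u ⬝ᵥ u := by
  simp only [dotProduct, sq]

lemma sum_eproj_sq {n : ℕ} (k w : Fin n → ℝ) :
    ∑ i, eproj k w i ^ 2 = w ⬝ᵥ w - (k ⬝ᵥ k)⁻¹ * (w ⬝ᵥ k) ^ 2 := by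
  rw [sum_sq_eq_dotProduct_self, eproj, edot, sum_sq_eq_dotProduct_self,
    show (∑ i, w i * k i) = w ⬝ᵥ k from rfl]
  simp only [sub_dotProduct, dotProduct_sub, smul_dotProduct, dotProduct_smul, smul_eq_mul,
    dotProduct_comm k w]
  rcases eq_or_ne (k ⬝ᵥ k) 0 with hk | hk
  · simp [hk]
  · field_simp
    ring

lemma sum_eproj_transpose_mulVec_sq {m n : ℕ} (B : Matrix (Fin m) (Fin n) ℝ) (k : Fin n → ℝ)
    (P : Fin m → ℝ) : ∑ i, eproj k (Bᵀ *ᵥ P) i ^ 2 = P ⬝ᵥ (projGram B k *ᵥ P) := by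
  have hww : (Bᵀ *ᵥ P) ⬝ᵥ (Bᵀ *ᵥ P) = P ⬝ᵥ ((B * Bᵀ) *ᵥ P) := by
    rw [← mulVec_mulVec, mulVec_transpose, dotProduct_mulVec]
  have hwk : (Bᵀ *ᵥ P) ⬝ᵥ k = P ⬝ᵥ (B *ᵥ k) := by
    rw [dotProduct_mulVec, mulVec_transpose]
  rw [sum_eproj_sq, hww, hwk, projGram, sub_mulVec, dotProduct_sub, smul_mulVec, dotProduct_smul,
    vecMulVec_mulVec, op_smul_eq_smul, dotProduct_smul, dotProduct_comm (B *ᵥ k), smul_eq_mul,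
    smul_eq_mul, sq]

end Projection

section Determinant

variable {ι ν α : Type*} [Fintype ι] [DecidableEq ι] [Fintype ν] [Field α]

lemma det_fromRows_replicateRow_mul_transpose (B : Matrix ι ν α) (k : ν → α)
    (hk : k ⬝ᵥ k ≠ 0) :
    det (fromRows B (replicateRow (Fin 1) k) * (fromRows B (replicateRow (Fin 1) k))ᵀ) =
      (k ⬝ᵥ k) * det (projGram B k) := by
  let D : Matrix (Fin 1) (Fin 1) α := replicateRow (Fin 1) k * replicateCol (Fin 1) k
  let : Invertible D := invertibleOfRightInverse D (of fun _ _ => (k ⬝ᵥ k)⁻¹) <| by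
    ext i j
    fin_cases i; fin_cases j
    simp [D, replicateRow_mul_replicateCol, mul_apply, hk]
  have hschur : B * replicateCol (Fin 1) k * ⅟D * (replicateRow (Fin 1) k * Bᵀ) =
      (k ⬝ᵥ k)⁻¹ • vecMulVec (B *ᵥ k) (B *ᵥ k) := by
    ext i j
    simp [D, mul_apply, vecMulVec_apply, mulVec, dotProduct, mul_comm (k _)]
    ring
  rw [transpose_fromRows, fromRows_mul_fromCols, transpose_replicateRow, det_fromBlocks₂₂, hschur,
    det_unique]
  rfl

end Determinant

lemma of_dite_eq_submatrix_fromRows {ν α : Type*} {m : ℕ} (B : Matrix (Fin m) ν α) (k : ν → α) :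
    (of fun (i : Fin (m + 1)) j => if h : (i : ℕ) < m then B ⟨i, h⟩ j else k j) =
      (fromRows B (replicateRow (Fin 1) k)).submatrix finSumFinEquiv.symm (Equiv.refl ν) := by
  ext i j
  induction i using Fin.lastCases <;> simp

lemma det_projGram_of_det_eq_one {α : Type*} [Field α] {m : ℕ} (B : Matrix (Fin m) (Fin (m + 1)) α)
    (k : Fin (m + 1) → α) (hk : k ⬝ᵥ k ≠ 0)
    (hdet : (of fun (i : Fin (m + 1)) j => if h : (i : ℕ) < m then B ⟨i, h⟩ j else k j).det = 1) :
    det (projGram B k) = (k ⬝ᵥ k)⁻¹ := by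
  rw [of_dite_eq_submatrix_fromRows] at hdet
  have hgram := det_fromRows_replicateRow_mul_transpose B k hk
  rw [← det_submatrix_equiv_self finSumFinEquiv.symm, ← submatrix_mul_equiv _ _ _ (Equiv.refl _),
    ← transpose_submatrix, det_mul, det_transpose, hdet, one_mul] at hgram
  exact eq_inv_of_mul_eq_one_right hgram.symm

theorem stmt_14_general (m : ℕ) (k : Fin (m + 1) → ℝ) (hk : k ≠ 0)
    (Ahat : Matrix (Fin m) (Fin (m + 1)) ℝ)
    (hdet : (Matrix.of fun (i j : Fin (m + 1)) =>
        if h : (i : ℕ) < m then Ahat ⟨i, h⟩ j else k j).det = 1) :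
    ∀ Phat : Fin m → ℝ,
      (hessianM
          (fun P : Fin m → ℝ =>
            (∑ i, k i ^ 2)⁻¹ * ∑ i, (eproj k (Ahatᵀ.mulVec P)) i ^ 2)
          Phat).det =
        2 ^ m / (∑ i, k i ^ 2) ^ (m + 1) := by
  intro Phat
  have hκ := sum_sq_eq_dotProduct_self k
  have hκ0 : k ⬝ᵥ k ≠ 0 := by rwa [Ne, dotProduct_self_eq_zero]
  have hquad : (fun P => (∑ i, k i ^ 2)⁻¹ * ∑ i, eproj k (Ahatᵀ *ᵥ P) i ^ 2) =
      fun P => P ⬝ᵥ (((k ⬝ᵥ k)⁻¹ • projGram Ahat k) *ᵥ P) := by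
    funext P
    rw [hκ, sum_eproj_transpose_mulVec_sq, smul_mulVec, dotProduct_smul, smul_eq_mul]
  rw [hquad, hessianM_dotProduct_mulVec_self, transpose_smul, projGram_transpose, ← two_smul ℝ,
    smul_smul, det_smul, det_projGram_of_det_eq_one Ahat k hκ0 hdet, hκ,
    Fintype.card_fin, mul_pow, inv_pow, pow_succ]
  field_simp

theorem stmt_14 (m : ℕ) (hm : 1 ≤ m) (k : Fin (m + 1) → ℝ) (hk : k ≠ 0)
    (Ahat : Matrix (Fin m) (Fin (m + 1)) ℝ)
    (hdet : (Matrix.of fun (i j : Fin (m + 1)) =>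
        if h : (i : ℕ) < m then Ahat ⟨i, h⟩ j else k j).det = 1) :
    ∀ Phat : Fin m → ℝ,
      (hessianM
          (fun P : Fin m → ℝ =>
            (∑ i, k i ^ 2)⁻¹ * ∑ i, (eproj k (Ahatᵀ.mulVec P)) i ^ 2)
          Phat).det =
        2 ^ m / (∑ i, k i ^ 2) ^ (m + 1) :=
  stmt_14_general m k hk Ahat hdet
end

section
/- For every E with −1 < E < 1, setting x_E := arccos(−E) ∈ (0, π), one has (1/(2π))·∫_{−x_E}^{x_E} (E + cos x)^{−1/2} dx ≥ 1/√2. -/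
/-!
Put `a := arccos (-E)`, so that `E + cos x = cos x - cos a = 2 (sin² (a/2) - sin² (x/2))`.
Hence `cos (x/2) / √(E + cos x)` has the explicit primitive `√2 · arcsin (sin (x/2) / sin (a/2))`,
which increases by exactly `√2 π` over `[-a, a]`. Since `cos (x/2) ≤ 1`, the integrand
`1 / √(E + cos x)` dominates this derivative; since `cos (x/2) ≥ cos (a/2) > 0`, it is also at most
a constant multiple of it, which makes it integrable.
-/

open Real MeasureTheory intervalIntegral Set

lemma sin_sq_half (x : ℝ) : sin (x / 2) ^ 2 = (1 - cos x) / 2 := by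
  rw [sin_sq, cos_sq, show 2 * (x / 2) = x by ring]
  ring

lemma cos_sub_cos_eq_two_mul_sin_sq_half_sub (x a : ℝ) :
    cos x - cos a = 2 * (sin (a / 2) ^ 2 - sin (x / 2) ^ 2) := by
  rw [sin_sq_half, sin_sq_half]
  ring

lemma cos_lt_cos_of_abs_lt {x a : ℝ} (hxa : |x| < a) (ha : a ≤ π) : cos a < cos x := by
  rw [← cos_abs x]
  exact cos_lt_cos_of_nonneg_of_le_pi (abs_nonneg x) ha hxa

lemma cos_half_pos_of_abs_lt_pi {x : ℝ} (hx : |x| < π) : 0 < cos (x / 2) := by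
  have : |x / 2| < π / 2 := by rw [abs_div, abs_two]; linarith
  exact cos_pos_of_mem_Ioo ⟨(abs_lt.1 this).1, (abs_lt.1 this).2⟩

noncomputable def librationPrimitive (a x : ℝ) : ℝ :=
  √2 * arcsin (sin (x / 2) / sin (a / 2))

lemma librationPrimitive_self {a : ℝ} (ha0 : 0 < a) (ha : a < 2 * π) :
    librationPrimitive a a = √2 * (π / 2) := by
  rw [librationPrimitive, div_self (sin_pos_of_pos_of_lt_pi (by linarith) (by linarith)).ne',
    arcsin_one]

lemma librationPrimitive_neg (a x : ℝ) :
    librationPrimitive a (-x) = -librationPrimitive a x := by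
  simp only [librationPrimitive, neg_div, sin_neg, arcsin_neg, mul_neg]

lemma continuous_librationPrimitive (a : ℝ) : Continuous (librationPrimitive a) := by
  unfold librationPrimitive
  fun_prop

lemma hasDerivAt_librationPrimitive {x a : ℝ} (hxa : |x| < a) (ha : a ≤ π) :
    HasDerivAt (librationPrimitive a) (cos (x / 2) / √(cos x - cos a)) x := by
  set s := sin (a / 2)
  have hs : 0 < s := sin_pos_of_pos_of_lt_pi (by linarith [abs_nonneg x]) (by linarith [pi_pos])
  have hgap : 0 < cos x - cos a := sub_pos.2 (cos_lt_cos_of_abs_lt hxa ha)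
  have hu : (sin (x / 2) / s) ^ 2 < 1 := by
    rw [div_pow, div_lt_one (by positivity)]
    linarith [cos_sub_cos_eq_two_mul_sin_sq_half_sub x a]
  have hu1 : sin (x / 2) / s ≠ -1 := fun h => by norm_num [h] at hu
  have hu2 : sin (x / 2) / s ≠ 1 := fun h => by norm_num [h] at hu
  have hsqrt : √(1 - (sin (x / 2) / s) ^ 2) = √(cos x - cos a) / (√2 * s) := by
    have h : 1 - (sin (x / 2) / s) ^ 2 = (cos x - cos a) / (√2 * s) ^ 2 := by
      rw [mul_pow, sq_sqrt zero_le_two, cos_sub_cos_eq_two_mul_sin_sq_half_sub]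
      field_simp
      rfl
    rw [h, sqrt_div' _ (by positivity), sqrt_sq (by positivity)]
  have hsin : HasDerivAt (fun y => sin (y / 2) / s) (cos (x / 2) * (1 / 2) / s) x :=
    ((hasDerivAt_sin _).comp x ((hasDerivAt_id x).div_const 2)).div_const s
  refine (((hasDerivAt_arcsin hu1 hu2).comp x hsin).const_mul √2).congr_deriv ?_
  rw [hsqrt]
  field_simp
  rw [sq_sqrt zero_le_two]

lemma intervalIntegrable_cos_half_div_sqrt_cos_sub_cos {a : ℝ} (ha0 : 0 < a) (ha : a ≤ π) :
    IntervalIntegrable (fun x => cos (x / 2) / √(cos x - cos a)) volume (-a) a := by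
  rw [intervalIntegrable_iff_integrableOn_Ioc_of_le (by linarith)]
  refine integrableOn_deriv_of_nonneg (continuous_librationPrimitive a).continuousOn
    (fun x hx => hasDerivAt_librationPrimitive (abs_lt.2 hx) ha) fun x hx => ?_
  have hxπ : |x| < π := (abs_lt.2 hx).trans_le ha
  exact div_nonneg (cos_half_pos_of_abs_lt_pi hxπ).le (sqrt_nonneg _)

lemma integral_cos_half_div_sqrt_cos_sub_cos {a : ℝ} (ha0 : 0 < a) (ha : a ≤ π) :
    ∫ x in -a..a, cos (x / 2) / √(cos x - cos a) = √2 * π := by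
  rw [integral_eq_sub_of_hasDerivAt_of_le (by linarith)
    (continuous_librationPrimitive a).continuousOn
    (fun x hx => hasDerivAt_librationPrimitive (abs_lt.2 hx) ha)
    (intervalIntegrable_cos_half_div_sqrt_cos_sub_cos ha0 ha),
    librationPrimitive_neg, librationPrimitive_self ha0 (by linarith [pi_pos])]
  ring

lemma intervalIntegrable_one_div_sqrt_cos_sub_cos {a : ℝ} (ha0 : 0 < a) (ha : a < π) :
    IntervalIntegrable (fun x => 1 / √(cos x - cos a)) volume (-a) a := by
  have hcos : ∀ x ∈ Icc (-a) a, 0 < cos (x / 2) := fun x hx =>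
    cos_half_pos_of_abs_lt_pi ((abs_le.2 hx).trans_lt ha)
  have hint := intervalIntegrable_cos_half_div_sqrt_cos_sub_cos ha0 ha.le
  rw [intervalIntegrable_iff_integrableOn_Icc_of_le (by linarith)] at hint ⊢
  refine (hint.continuousOn_mul (g := fun x => 1 / cos (x / 2)) ?_ isCompact_Icc).congr_fun
    (fun x hx => ?_) measurableSet_Icc
  · exact continuousOn_const.div (by fun_prop) fun x hx => (hcos x hx).ne'
  · field_simp [(hcos x hx).ne']

lemma sqrt_two_mul_pi_le_integral_one_div_sqrt_cos_sub_cos {a : ℝ} (ha0 : 0 < a) (ha : a < π) :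
    √2 * π ≤ ∫ x in -a..a, 1 / √(cos x - cos a) := by
  rw [← integral_cos_half_div_sqrt_cos_sub_cos ha0 ha.le]
  exact integral_mono (by linarith) (intervalIntegrable_cos_half_div_sqrt_cos_sub_cos ha0 ha.le)
    (intervalIntegrable_one_div_sqrt_cos_sub_cos ha0 ha)
    fun x => div_le_div_of_nonneg_right (cos_le_one _) (sqrt_nonneg _)

theorem stmt_17 (E : ℝ) (hE1 : -1 < E) (hE2 : E < 1) :
    1 / Real.sqrt 2 ≤
      (1 / (2 * Real.pi)) *
        ∫ x in (-(Real.arccos (-E)))..(Real.arccos (-E)),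
          1 / Real.sqrt (E + Real.cos x) := by
  set a := arccos (-E)
  have ha0 : 0 < a := arccos_pos.2 (by linarith)
  have ha : a < π := arccos_lt_pi.2 (by linarith)
  have hE : E = -cos a := by rw [cos_arccos (by linarith) (by linarith), neg_neg]
  have key := sqrt_two_mul_pi_le_integral_one_div_sqrt_cos_sub_cos ha0 ha
  simp only [hE, neg_add_eq_sub]
  calc 1 / √2 = 1 / (2 * π) * (√2 * π) := by
        field_simp
        rw [sq_sqrt zero_le_two]
    _ ≤ _ := by gcongr
end

section
/- Let n ≥ 1 and let Φ : ℝⁿ × ℝⁿ → ℝⁿ × ℝⁿ be a continuously differentiable map of the form Φ(J, ψ) = (Ĵ, I_n(J, ψ_n), ψ̂ + a(J, ψ_n), φ_n(J, ψ_n)), where J = (Ĵ, J_n) ∈ ℝ^{n−1}×ℝ and ψ = (ψ̂, ψ_n) ∈ ℝ^{n−1}×ℝ, for C¹ functions I_n, φ_n : ℝⁿ×ℝ → ℝ and a : ℝⁿ×ℝ → ℝ^{n−1}. Assume that Φ is symplectic, i.e. at every point its Jacobian matrix belongs to the real symplectic group Sp(2n, ℝ) (it preserves the standard symplectic form dJ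 ∧ dψ). Then at every point one has ∂_{J_n} I_n · ∂_{ψ_n} φ_n − ∂_{ψ_n} I_n · ∂_{J_n} φ_n = 1; in other words, for each fixed Ĵ the map (J_n, ψ_n) ↦ (I_n(J, ψ_n), φ_n(J, ψ_n)) is symplectic (area- and orientation-preserving). -/
/-- The standard basis vectors of `ℝⁿ × ℝⁿ`, indexed by `Fin n ⊕ Fin n`. -/
def basisVec {n : ℕ} : (Fin n ⊕ Fin n) → (Fin n → ℝ) × (Fin n → ℝ)
  | Sum.inl i => (Pi.single i 1, 0)
  | Sum.inr i => (0, Pi.single i 1)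

/-- The Jacobian matrix of a map `Φ : ℝⁿ × ℝⁿ → ℝⁿ × ℝⁿ` at the point `p`,
as a `(Fin n ⊕ Fin n) × (Fin n ⊕ Fin n)` real matrix. -/
noncomputable def jacMatrix {n : ℕ}
    (Φ : (Fin n → ℝ) × (Fin n → ℝ) → (Fin n → ℝ) × (Fin n → ℝ))
    (p : (Fin n → ℝ) × (Fin n → ℝ)) :
    Matrix (Fin n ⊕ Fin n) (Fin n ⊕ Fin n) ℝ :=
  Matrix.of fun i j =>
    Sum.elim (fun i' => (fderiv ℝ Φ p (basisVec j)).1 i')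
      (fun i' => (fderiv ℝ Φ p (basisVec j)).2 i') i

/-!
Since `Φ` fixes the coordinates `J_i` for `i < n`, the corresponding rows of its Jacobian `M` are
unit rows. In the `(J_n, ψ_n)` entry of `Mᵀ 𝕁 M = 𝕁`, i.e. `ω(M e_{J_n}, M e_{ψ_n}) = 1`, only the
`i = n` term survives, and it is exactly the Jacobian determinant of `(J_n, ψ_n) ↦ (I_n, φ_n)`.
Restricting `Φ` to the slice `ψ = ψ_n e_n` exhibits `I_n` and `φ_n` as coordinates of `Φ`, so their
partial derivatives are entries of `M`. Differentiability comes from the symplectic hypothesis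
itself: at a point where `Φ` is not differentiable, `fderiv` and hence `jacMatrix` are `0`, which
is not symplectic.
-/

open Matrix

namespace SymplecticGroup

variable {l R : Type*} [Fintype l] [DecidableEq l] [CommRing R]
  {M : Matrix (l ⊕ l) (l ⊕ l) R}

theorem sum_mul_sub_mul_eq_one_apply (hM : M ∈ symplecticGroup l R) (k k' : l) :
    ∑ i, (M (.inl i) (.inl k) * M (.inr i) (.inr k') -
      M (.inl i) (.inr k') * M (.inr i) (.inl k)) = (1 : Matrix l l R) k k' := by
  have h := congrFun (congrFun (mem_iff'.mp hM) (.inl k)) (.inr k')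
  rw [Matrix.mul_assoc] at h
  simp only [J, Matrix.mul_apply, transpose_apply, Fintype.sum_sum_type, fromBlocks_apply₁₁,
    Matrix.zero_apply, zero_mul, Finset.sum_const_zero, fromBlocks_apply₁₂, Matrix.neg_apply,
    Matrix.one_apply, neg_mul, ite_mul, one_mul, Finset.sum_neg_distrib, Finset.sum_ite_eq,
    Finset.mem_univ, ↓reduceIte, zero_add, mul_neg, fromBlocks_apply₂₁, fromBlocks_apply₂₂,
    add_zero] at h
  simp only [Finset.sum_sub_distrib, mul_comm (M (.inl _) (.inr k')), Matrix.one_apply]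
  linear_combination -h

theorem mul_sub_mul_eq_one_of_inl_eq_zero (hM : M ∈ symplecticGroup l R) {k : l}
    (hJ : ∀ i ≠ k, M (.inl i) (.inl k) = 0) (hψ : ∀ i ≠ k, M (.inl i) (.inr k) = 0) :
    M (.inl k) (.inl k) * M (.inr k) (.inr k) - M (.inl k) (.inr k) * M (.inr k) (.inl k) = 1 := by
  have h := sum_mul_sub_mul_eq_one_apply hM k k
  rwa [Finset.sum_eq_single k, one_apply_eq] at h
  · intro i _ hi
    rw [hJ i hi, hψ i hi, zero_mul, zero_mul, sub_zero]
  · exact fun hk => absurd (Finset.mem_univ k) hk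

theorem zero_notMem [Nonempty l] [Nontrivial R] :
    (0 : Matrix (l ⊕ l) (l ⊕ l) R) ∉ symplecticGroup l R := by
  intro h
  obtain ⟨k⟩ := ‹Nonempty l›
  have := congrFun (congrFun (mem_iff'.mp h) (.inl k)) (.inr k)
  simp [J] at this

end SymplecticGroup

theorem fderiv_clm_comp_comp_clm_apply {𝕜 E F G H : Type*} [NontriviallyNormedField 𝕜]
    [NormedAddCommGroup E] [NormedSpace 𝕜 E] [NormedAddCommGroup F] [NormedSpace 𝕜 F]
    [NormedAddCommGroup G] [NormedSpace 𝕜 G] [NormedAddCommGroup H] [NormedSpace 𝕜 H]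
    (ℓ : G →L[𝕜] H) (ι : E →L[𝕜] F) {Φ : F → G} {x : E} (hΦ : DifferentiableAt 𝕜 Φ (ι x))
    (v : E) : fderiv 𝕜 (fun y => ℓ (Φ (ι y))) x v = ℓ (fderiv 𝕜 Φ (ι x) (ι v)) := by
  have h : HasFDerivAt (fun y => ℓ (Φ (ι y))) (ℓ.comp ((fderiv 𝕜 Φ (ι x)).comp ι)) x :=
    ℓ.hasFDerivAt.comp x (hΦ.hasFDerivAt.comp x ι.hasFDerivAt)
  rw [h.fderiv]
  rfl

section Jacobian

variable {n : ℕ} {Φ : (Fin n → ℝ) × (Fin n → ℝ) → (Fin n → ℝ) × (Fin n → ℝ)}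
  {p : (Fin n → ℝ) × (Fin n → ℝ)}

theorem jacMatrix_eq_zero_of_not_differentiableAt (h : ¬ DifferentiableAt ℝ Φ p) :
    jacMatrix Φ p = 0 := by
  ext (i | i) j <;> simp [jacMatrix, fderiv_zero_of_not_differentiableAt h]

theorem differentiableAt_of_jacMatrix_mem_symplecticGroup [NeZero n]
    (h : jacMatrix Φ p ∈ symplecticGroup (Fin n) ℝ) : DifferentiableAt ℝ Φ p := by
  by_contra hd
  exact SymplecticGroup.zero_notMem (jacMatrix_eq_zero_of_not_differentiableAt hd ▸ h)

theorem fderiv_fst_comp_apply {E : Type*} [NormedAddCommGroup E] [NormedSpace ℝ E]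
    (ι : E →L[ℝ] (Fin n → ℝ) × (Fin n → ℝ)) {x : E} (hd : DifferentiableAt ℝ Φ (ι x))
    (i : Fin n) (v : E) :
    fderiv ℝ (fun y => (Φ (ι y)).1 i) x v = (fderiv ℝ Φ (ι x) (ι v)).1 i :=
  fderiv_clm_comp_comp_clm_apply ((ContinuousLinearMap.proj i).comp (.fst ℝ _ _)) ι hd v

theorem fderiv_snd_comp_apply {E : Type*} [NormedAddCommGroup E] [NormedSpace ℝ E]
    (ι : E →L[ℝ] (Fin n → ℝ) × (Fin n → ℝ)) {x : E} (hd : DifferentiableAt ℝ Φ (ι x))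
    (i : Fin n) (v : E) :
    fderiv ℝ (fun y => (Φ (ι y)).2 i) x v = (fderiv ℝ Φ (ι x) (ι v)).2 i :=
  fderiv_clm_comp_comp_clm_apply ((ContinuousLinearMap.proj i).comp (.snd ℝ _ _)) ι hd v

theorem basisVec_fst_apply (i : Fin n) (j : Fin n ⊕ Fin n) :
    (basisVec j).1 i = (1 : Matrix (Fin n ⊕ Fin n) (Fin n ⊕ Fin n) ℝ) (.inl i) j := by
  rcases j with j | j <;> simp [basisVec, Pi.single_apply, one_apply]

theorem jacMatrix_inl_apply_of_fst_apply_eq (hd : DifferentiableAt ℝ Φ p) {i : Fin n}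
    (hi : ∀ x, (Φ x).1 i = x.1 i) (j : Fin n ⊕ Fin n) :
    jacMatrix Φ p (.inl i) j = (1 : Matrix (Fin n ⊕ Fin n) (Fin n ⊕ Fin n) ℝ) (.inl i) j := by
  have hlin : (fun x => (Φ x).1 i) =
      (ContinuousLinearMap.proj i).comp (ContinuousLinearMap.fst ℝ _ (Fin n → ℝ)) :=
    funext hi
  have h := fderiv_fst_comp_apply (.id ℝ _) hd i (basisVec j)
  simp only [ContinuousLinearMap.id_apply, hlin, ContinuousLinearMap.fderiv] at h
  rw [← basisVec_fst_apply]
  exact h.symm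

end Jacobian

theorem stmt_19_general (m : ℕ)
    (In φn : (Fin (m + 1) → ℝ) × ℝ → ℝ)
    (a : (Fin (m + 1) → ℝ) × ℝ → Fin m → ℝ)
    (Φ : (Fin (m + 1) → ℝ) × (Fin (m + 1) → ℝ) →
      (Fin (m + 1) → ℝ) × (Fin (m + 1) → ℝ))
    (hΦ : ∀ (J ψ : Fin (m + 1) → ℝ),
      Φ (J, ψ) =
        ((fun i : Fin (m + 1) => if h : (i : ℕ) < m then J i else In (J, ψ (Fin.last m))),
         (fun i : Fin (m + 1) => if h : (i : ℕ) < m then ψ i + a (J, ψ (Fin.last m)) ⟨i, h⟩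
            else φn (J, ψ (Fin.last m)))))
    (hsymp : ∀ p, jacMatrix Φ p ∈ Matrix.symplecticGroup (Fin (m + 1)) ℝ) :
    ∀ (J : Fin (m + 1) → ℝ) (t : ℝ),
      fderiv ℝ In (J, t) (Pi.single (Fin.last m) 1, 0) *
          fderiv ℝ φn (J, t) (0, 1) -
        fderiv ℝ In (J, t) (0, 1) *
          fderiv ℝ φn (J, t) (Pi.single (Fin.last m) 1, 0) = 1 := by
  intro J t
  set ι := (ContinuousLinearMap.id ℝ (Fin (m + 1) → ℝ)).prodMap
    (ContinuousLinearMap.single ℝ (fun _ => ℝ) (Fin.last m))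
  have hsympι := hsymp (ι (J, t))
  have hd := differentiableAt_of_jacMatrix_mem_symplecticGroup hsympι
  have hIn : In = fun q => (Φ (ι q)).1 (Fin.last m) := funext fun q => by simp [ι, hΦ]
  have hφn : φn = fun q => (Φ (ι q)).2 (Fin.last m) := funext fun q => by simp [ι, hΦ]
  have hfix : ∀ i ≠ Fin.last m, ∀ x, (Φ x).1 i = x.1 i := by
    rintro i hi ⟨J, ψ⟩
    simp [hΦ, Fin.val_lt_last hi]
  have hrow : ∀ i ≠ Fin.last m, ∀ j,
      jacMatrix Φ (ι (J, t)) (.inl i) j = (1 : Matrix (Fin (m + 1) ⊕ Fin (m + 1)) _ ℝ) (.inl i) j :=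
    fun i hi => jacMatrix_inl_apply_of_fst_apply_eq hd (hfix i hi)
  have key := SymplecticGroup.mul_sub_mul_eq_one_of_inl_eq_zero hsympι (k := Fin.last m)
    (fun i hi => by simp [hrow i hi, hi]) (fun i hi => by simp [hrow i hi])
  rw [hIn, hφn, fderiv_fst_comp_apply ι hd, fderiv_fst_comp_apply ι hd,
    fderiv_snd_comp_apply ι hd, fderiv_snd_comp_apply ι hd]
  simpa [jacMatrix, basisVec, ι] using key

theorem stmt_19 (m : ℕ)
    (In φn : (Fin (m + 1) → ℝ) × ℝ → ℝ)
    (a : (Fin (m + 1) → ℝ) × ℝ → Fin m → ℝ)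
    (hIn : ContDiff ℝ 1 In) (hφn : ContDiff ℝ 1 φn) (ha : ContDiff ℝ 1 a)
    (Φ : (Fin (m + 1) → ℝ) × (Fin (m + 1) → ℝ) →
      (Fin (m + 1) → ℝ) × (Fin (m + 1) → ℝ))
    (hΦ : ∀ (J ψ : Fin (m + 1) → ℝ),
      Φ (J, ψ) =
        ((fun i : Fin (m + 1) => if h : (i : ℕ) < m then J i else In (J, ψ (Fin.last m))),
         (fun i : Fin (m + 1) => if h : (i : ℕ) < m then ψ i + a (J, ψ (Fin.last m)) ⟨i, h⟩
            else φn (J, ψ (Fin.last m)))))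
    (hsymp : ∀ p, jacMatrix Φ p ∈ Matrix.symplecticGroup (Fin (m + 1)) ℝ) :
    ∀ (J : Fin (m + 1) → ℝ) (t : ℝ),
      fderiv ℝ In (J, t) (Pi.single (Fin.last m) 1, 0) *
          fderiv ℝ φn (J, t) (0, 1) -
        fderiv ℝ In (J, t) (0, 1) *
          fderiv ℝ φn (J, t) (Pi.single (Fin.last m) 1, 0) = 1 :=
  stmt_19_general m In φn a Φ hΦ hsymp
end
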